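/- arXiv:0906.5089 — 2 statements merged into one kernel-verified Lean document; each statement's English description precedes it below -/
import Mathlib

section
/- Let β be a positive real number. Then for every p ∈ (0,1], the Hausdorff triplet (respectively quartet) distance and the parametric triplet (respectively quartet) distance d^(p) are equivalent when restricted to pairs of rooted (respectively unrooted) phylogenies (T1,T2) over the same taxon set satisfying |U(T1,T2)| ≤ β·(|D(T1,T2)| + |R1(T1,T2)| + |R2(T1,T2)|): there exist constants c1, c2 > 0 (depending only on p and β) such that c1·d^(p)(T1,T2) ≤ d_Haus(T1,T2) ≤ c2·d^(p)(T1,T2) for all such pairs. -/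
/-!
Upper bound: a triplet (quartet) resolved identically in `T₁` and `T₂` stays so in all their
refinements, so two full refinements differ on at most `|D| + |R₁| + |R₂| + |U|` triplets, and
`|U| ≤ β (|D| + |R₁| + |R₂|)` by hypothesis.

Lower bound: the triplets of `D` are resolved differently in all refinements, and `T₁` can be
refined so that at least two thirds of `R₂` disagree with `T₂`. Refine greedily: while some
cluster has three or more children, add the union of two of them. A set `W` of at most four
leaves that is still unresolved gets resolved by the union of `A` and `B` exactly when each of
them contains one point of `W`; among those pairs of children, the ones resolving `W` as `T₂` does
are pairwise disjoint, hence at most a third of them. Averaging over all pairs of children, some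
merge agrees with `T₂` on at most a third of the sets it resolves, and iterating down to a binary
hierarchy gives the refinement. An unrooted tree is rooted at a leaf `x₀`, and a quartet `X` is
then handled through the set `X \ {x₀}` of three or four leaves.
-/

open Finset

attribute [local instance] Classical.propDecidable

/-- A rooted phylogenetic tree over the taxon set `Fin n`, encoded by its hierarchy of
clusters: for each node of the tree, the set of leaves descending from that node.
The conditions say that the whole leaf set and all singletons are clusters, the empty
set is not a cluster, and that the family is laminar.  Such families correspond exactly
to rooted phylogenies in which every internal node has at least two children. -/
structure RTree (n : ℕ) where
  clusters : Finset (Finset (Fin n))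
  univ_mem : Finset.univ ∈ clusters
  singleton_mem : ∀ x : Fin n, {x} ∈ clusters
  empty_not_mem : ∅ ∉ clusters
  laminar : ∀ C ∈ clusters, ∀ D ∈ clusters, C ⊆ D ∨ D ⊆ C ∨ C ∩ D = ∅

/-- All triplets (3-element subsets) of `Fin n`. -/
def triplets (n : ℕ) : Finset (Finset (Fin n)) :=
  Finset.powersetCard 3 Finset.univ

/-- The cluster family of the restriction `T|X`, for a rooted tree with cluster
family `F`: the nonempty intersections of clusters with `X`. -/
noncomputable def famRestrict {n : ℕ} (F : Finset (Finset (Fin n))) (X : Finset (Fin n)) :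
    Finset (Finset (Fin n)) :=
  (F.image (· ∩ X)).filter (· ≠ ∅)

/-- A triplet `X` is resolved in a rooted tree with cluster family `F` iff the
restriction `T|X` is fully resolved, equivalently iff some cluster contains exactly
two of the three elements of `X`. -/
def famResolved {n : ℕ} (F : Finset (Finset (Fin n))) (X : Finset (Fin n)) : Prop :=
  ∃ C ∈ F, (C ∩ X).card = 2

/-- Triplets resolved, identically, in both trees. -/
noncomputable def famSetS {n : ℕ} (F G : Finset (Finset (Fin n))) :
    Finset (Finset (Fin n)) :=
  (triplets n).filter fun X =>
    famResolved F X ∧ famResolved G X ∧ famRestrict F X = famRestrict G X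

/-- Triplets resolved, differently, in both trees. -/
noncomputable def famSetD {n : ℕ} (F G : Finset (Finset (Fin n))) :
    Finset (Finset (Fin n)) :=
  (triplets n).filter fun X =>
    famResolved F X ∧ famResolved G X ∧ famRestrict F X ≠ famRestrict G X

/-- Triplets resolved in the first tree but not in the second. -/
noncomputable def famSetR1 {n : ℕ} (F G : Finset (Finset (Fin n))) :
    Finset (Finset (Fin n)) :=
  (triplets n).filter fun X => famResolved F X ∧ ¬ famResolved G X

/-- Triplets resolved in the second tree but not in the first. -/
noncomputable def famSetR2 {n : ℕ} (F G : Finset (Finset (Fin n))) :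
    Finset (Finset (Fin n)) :=
  (triplets n).filter fun X => famResolved G X ∧ ¬ famResolved F X

/-- Triplets unresolved in both trees. -/
noncomputable def famSetU {n : ℕ} (F G : Finset (Finset (Fin n))) :
    Finset (Finset (Fin n)) :=
  (triplets n).filter fun X => ¬ famResolved F X ∧ ¬ famResolved G X

/-- The parametric triplet distance, at the level of cluster families. -/
noncomputable def famPdist {n : ℕ} (p : ℝ) (F G : Finset (Finset (Fin n))) : ℝ :=
  ((famSetD F G).card : ℝ) +
    p * (((famSetR1 F G).card : ℝ) + ((famSetR2 F G).card : ℝ))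

namespace RTree

variable {n : ℕ}

/-- The cluster family of the restriction `T|X`. -/
noncomputable def restrict (T : RTree n) (X : Finset (Fin n)) : Finset (Finset (Fin n)) :=
  famRestrict T.clusters X

/-- The triplet `X` is resolved in `T`, i.e. `T|X` is fully resolved. -/
def Resolved (T : RTree n) (X : Finset (Fin n)) : Prop :=
  famResolved T.clusters X

/-- A rooted phylogeny is fully resolved (all internal nodes have exactly two
children) iff every triplet is resolved in it. -/
def FullyResolved (T : RTree n) : Prop :=
  ∀ X ∈ triplets n, T.Resolved X

noncomputable def setS (T₁ T₂ : RTree n) : Finset (Finset (Fin n)) :=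
  famSetS T₁.clusters T₂.clusters

noncomputable def setD (T₁ T₂ : RTree n) : Finset (Finset (Fin n)) :=
  famSetD T₁.clusters T₂.clusters

noncomputable def setR1 (T₁ T₂ : RTree n) : Finset (Finset (Fin n)) :=
  famSetR1 T₁.clusters T₂.clusters

noncomputable def setR2 (T₁ T₂ : RTree n) : Finset (Finset (Fin n)) :=
  famSetR2 T₁.clusters T₂.clusters

noncomputable def setU (T₁ T₂ : RTree n) : Finset (Finset (Fin n)) :=
  famSetU T₁.clusters T₂.clusters

/-- The parametric triplet distance `d⁽ᵖ⁾(T₁,T₂)`. -/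
noncomputable def pdist (p : ℝ) (T₁ T₂ : RTree n) : ℝ :=
  famPdist p T₁.clusters T₂.clusters

theorem clusters_injective : Function.Injective (clusters (n := n)) := by
  rintro ⟨s₁, _, _, _, _⟩ ⟨s₂, _, _, _, _⟩ h
  simp only [mk.injEq] at h ⊢
  exact h

noncomputable instance : Fintype (RTree n) :=
  Fintype.ofInjective clusters clusters_injective

end RTree

/-- An unrooted phylogenetic tree over the taxon set `Fin n`, encoded by its split
system: the collection of all sets of leaves lying on one side of some edge of the
tree.  By the splits-equivalence (Buneman) theorem, the families satisfying these
conditions (all trivial splits present, closure under complementation, pairwise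
compatibility) correspond exactly to unrooted phylogenies in which every internal
node has degree at least three. -/
structure UTree (n : ℕ) where
  splits : Finset (Finset (Fin n))
  empty_not_mem : ∅ ∉ splits
  trivial_mem : ∀ x : Fin n, ({x} : Finset (Fin n)) = Finset.univ ∨ {x} ∈ splits
  compl_mem : ∀ A ∈ splits, Finset.univ \ A ∈ splits
  compat : ∀ A ∈ splits, ∀ B ∈ splits, A ⊆ B ∨ B ⊆ A ∨ A ∩ B = ∅ ∨ A ∪ B = Finset.univ

/-- All quartets (4-element subsets) of `Fin n`. -/
def quartets (n : ℕ) : Finset (Finset (Fin n)) :=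
  Finset.powersetCard 4 Finset.univ

/-- The split system of the restriction `T|X`, for an unrooted tree with split
system `F`: the proper nonempty intersections of split sides with `X`. -/
noncomputable def famRestrictU {n : ℕ} (F : Finset (Finset (Fin n))) (X : Finset (Fin n)) :
    Finset (Finset (Fin n)) :=
  (F.image (· ∩ X)).filter fun A => A ≠ ∅ ∧ A ≠ X

/-- A quartet `X` is resolved in an unrooted tree with split system `F` iff the
restriction `T|X` is fully resolved, equivalently iff some split side contains
exactly two of the four elements of `X`. -/
def famResolvedU {n : ℕ} (F : Finset (Finset (Fin n))) (X : Finset (Fin n)) : Prop :=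
  ∃ A ∈ F, (A ∩ X).card = 2

/-- Quartets resolved, identically, in both trees. -/
noncomputable def famSetSU {n : ℕ} (F G : Finset (Finset (Fin n))) :
    Finset (Finset (Fin n)) :=
  (quartets n).filter fun X =>
    famResolvedU F X ∧ famResolvedU G X ∧ famRestrictU F X = famRestrictU G X

/-- Quartets resolved, differently, in both trees. -/
noncomputable def famSetDU {n : ℕ} (F G : Finset (Finset (Fin n))) :
    Finset (Finset (Fin n)) :=
  (quartets n).filter fun X =>
    famResolvedU F X ∧ famResolvedU G X ∧ famRestrictU F X ≠ famRestrictU G X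

/-- Quartets resolved in the first tree but not in the second. -/
noncomputable def famSetR1U {n : ℕ} (F G : Finset (Finset (Fin n))) :
    Finset (Finset (Fin n)) :=
  (quartets n).filter fun X => famResolvedU F X ∧ ¬ famResolvedU G X

/-- Quartets resolved in the second tree but not in the first. -/
noncomputable def famSetR2U {n : ℕ} (F G : Finset (Finset (Fin n))) :
    Finset (Finset (Fin n)) :=
  (quartets n).filter fun X => famResolvedU G X ∧ ¬ famResolvedU F X

/-- Quartets unresolved in both trees. -/
noncomputable def famSetUU {n : ℕ} (F G : Finset (Finset (Fin n))) :
    Finset (Finset (Fin n)) :=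
  (quartets n).filter fun X => ¬ famResolvedU F X ∧ ¬ famResolvedU G X

/-- The parametric quartet distance, at the level of split systems. -/
noncomputable def famPdistU {n : ℕ} (p : ℝ) (F G : Finset (Finset (Fin n))) : ℝ :=
  ((famSetDU F G).card : ℝ) +
    p * (((famSetR1U F G).card : ℝ) + ((famSetR2U F G).card : ℝ))

namespace UTree

variable {n : ℕ}

/-- The split system of the restriction `T|X`. -/
noncomputable def restrict (T : UTree n) (X : Finset (Fin n)) : Finset (Finset (Fin n)) :=
  famRestrictU T.splits X

/-- The quartet `X` is resolved in `T`, i.e. `T|X` is fully resolved. -/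
def Resolved (T : UTree n) (X : Finset (Fin n)) : Prop :=
  famResolvedU T.splits X

/-- An unrooted phylogeny is fully resolved (all internal nodes have degree exactly
three) iff every quartet is resolved in it. -/
def FullyResolved (T : UTree n) : Prop :=
  ∀ X ∈ quartets n, T.Resolved X

noncomputable def setS (T₁ T₂ : UTree n) : Finset (Finset (Fin n)) :=
  famSetSU T₁.splits T₂.splits

noncomputable def setD (T₁ T₂ : UTree n) : Finset (Finset (Fin n)) :=
  famSetDU T₁.splits T₂.splits

noncomputable def setR1 (T₁ T₂ : UTree n) : Finset (Finset (Fin n)) :=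
  famSetR1U T₁.splits T₂.splits

noncomputable def setR2 (T₁ T₂ : UTree n) : Finset (Finset (Fin n)) :=
  famSetR2U T₁.splits T₂.splits

noncomputable def setU (T₁ T₂ : UTree n) : Finset (Finset (Fin n)) :=
  famSetUU T₁.splits T₂.splits

/-- The parametric quartet distance `d⁽ᵖ⁾(T₁,T₂)`. -/
noncomputable def pdist (p : ℝ) (T₁ T₂ : UTree n) : ℝ :=
  famPdistU p T₁.splits T₂.splits

theorem splits_injective : Function.Injective (splits (n := n)) := by
  rintro ⟨s₁, _, _, _, _⟩ ⟨s₂, _, _, _, _⟩ h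
  simp only [mk.injEq] at h ⊢
  exact h

noncomputable instance : Fintype (UTree n) :=
  Fintype.ofInjective splits splits_injective

end UTree

namespace RTree

variable {n : ℕ}

/-- The set `F(T)` of full refinements of `T`: the fully resolved trees from which
`T` can be obtained by contracting internal edges, i.e. whose cluster family
contains that of `T`. -/
def FullRef (T : RTree n) : Set (RTree n) :=
  {t | t.FullyResolved ∧ T.clusters ⊆ t.clusters}

/-- The triplet distance between two (fully resolved) rooted trees: the number of
triplets resolved differently in the two trees. -/
noncomputable def tripletDist (T₁ T₂ : RTree n) : ℝ :=
  ((setD T₁ T₂).card : ℝ)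

/-- The Hausdorff triplet distance between two rooted phylogenies. -/
noncomputable def dHaus (T₁ T₂ : RTree n) : ℝ :=
  max (⨆ t₁ : T₁.FullRef, ⨅ t₂ : T₂.FullRef, tripletDist t₁.1 t₂.1)
      (⨆ t₂ : T₂.FullRef, ⨅ t₁ : T₁.FullRef, tripletDist t₁.1 t₂.1)

end RTree

namespace UTree

variable {n : ℕ}

/-- The set `F(T)` of full refinements of `T`: the fully resolved trees from which
`T` can be obtained by contracting internal edges, i.e. whose split system contains
that of `T`. -/
def FullRef (T : UTree n) : Set (UTree n) :=
  {t | t.FullyResolved ∧ T.splits ⊆ t.splits}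

/-- The quartet distance between two (fully resolved) unrooted trees: the number of
quartets resolved differently in the two trees. -/
noncomputable def quartetDist (T₁ T₂ : UTree n) : ℝ :=
  ((setD T₁ T₂).card : ℝ)

/-- The Hausdorff quartet distance between two unrooted phylogenies. -/
noncomputable def dHaus (T₁ T₂ : UTree n) : ℝ :=
  max (⨆ t₁ : T₁.FullRef, ⨅ t₂ : T₂.FullRef, quartetDist t₁.1 t₂.1)
      (⨆ t₂ : T₂.FullRef, ⨅ t₁ : T₁.FullRef, quartetDist t₁.1 t₂.1)

end UTree

section Hierarchy

variable {α : Type*}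

namespace Finset

variable [DecidableEq α]

/-- For `F ⊆ W` this says `T ∈ {F, W \ F}`; the form chosen is invariant under `T ↦ W \ T`
for every `F`. -/
def SameSplit (W F T : Finset α) : Prop :=
  T = F ∨ W \ T = F

lemma SameSplit.of_sdiff {W F M : Finset α} (h : SameSplit W F (W \ M)) :
    SameSplit W F (M ∩ W) := by
  rcases h with h | h
  · exact Or.inr (by rwa [sdiff_inter_self_right])
  · exact Or.inl (by rwa [sdiff_sdiff_right_self, inf_eq_inter, inter_comm] at h)

lemma sameSplit_sdiff (W M : Finset α) : SameSplit W (M ∩ W) (W \ M) :=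
  Or.inr (by rw [sdiff_sdiff_right_self, inf_eq_inter, inter_comm])

lemma SameSplit.disjoint_of_ne {W F T T' : Finset α} (hT : T ⊆ W) (hT' : T' ⊆ W)
    (h : SameSplit W F T) (h' : SameSplit W F T') (hne : T ≠ T') : Disjoint T T' := by
  rcases h with rfl | h <;> rcases h' with rfl | h'
  · exact absurd rfl hne
  · rw [← h']; exact Finset.sdiff_disjoint
  · rw [← h]; exact Finset.disjoint_sdiff
  · refine absurd ?_ hne
    rw [← sdiff_sdiff_eq_self hT, ← sdiff_sdiff_eq_self hT', h, h']

lemma inter_eq_of_subset_of_card_eq {E M W : Finset α} (hEM : E ⊆ M)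
    (h : #(E ∩ W) = #(M ∩ W)) : E ∩ W = M ∩ W :=
  eq_of_subset_of_card_le (inter_subset_inter_right hEM) h.ge

lemma inter_eq_or_eq_sdiff {E M W : Finset α} (hEM : E ⊆ M ∨ M ⊆ E ∨ Disjoint E M)
    (hW : #W ≤ 4) (hE : #(E ∩ W) = 2) (hM : #(M ∩ W) = 2) :
    E ∩ W = M ∩ W ∨ E ∩ W = W \ M := by
  rcases hEM with h | h | h
  · exact Or.inl (inter_eq_of_subset_of_card_eq h (by omega))
  · exact Or.inl (inter_eq_of_subset_of_card_eq h (by omega)).symm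
  · right
    refine eq_of_subset_of_card_le (fun x hx => ?_) ?_
    · rw [mem_inter] at hx
      exact mem_sdiff.2 ⟨hx.2, disjoint_left.1 h hx.1⟩
    · rw [← sdiff_inter_self_right, card_sdiff_of_subset inter_subset_right]
      omega

lemma SameSplit.of_inter_card_eq_two {E M W F : Finset α}
    (hEM : E ⊆ M ∨ M ⊆ E ∨ Disjoint E M) (hW : #W ≤ 4) (hE : #(E ∩ W) = 2)
    (hM : #(M ∩ W) = 2) (h : SameSplit W F (E ∩ W)) : SameSplit W F (M ∩ W) := by
  rcases inter_eq_or_eq_sdiff hEM hW hE hM with he | he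
  · exact he ▸ h
  · exact (he ▸ h).of_sdiff

lemma inter_erase_of_notMem {C X : Finset α} {x₀ : α} (h : x₀ ∉ C) :
    C ∩ X.erase x₀ = C ∩ X := by
  rw [inter_erase, erase_eq_of_notMem fun hx => h (mem_inter.1 hx).1]

lemma sameSplit_erase {X G E : Finset α} {x₀ : α} (hE : x₀ ∉ E)
    (h : E ∩ X = G ∩ X ∨ E ∩ X = X \ G) :
    SameSplit (X.erase x₀) (G ∩ X.erase x₀) (E ∩ X.erase x₀) := by
  rw [inter_erase_of_notMem hE]
  rcases h with h | h
  · exact Or.inl (by rw [inter_erase, ← h, erase_eq_of_notMem fun hx => hE (mem_inter.1 hx).1])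
  · refine Or.inr ?_
    rw [h]
    ext y
    simp only [mem_sdiff, mem_erase, mem_inter]
    tauto

end Finset

structure IsHierarchy (V : Finset α) (L : Finset (Finset α)) : Prop where
  top_mem : V ∈ L
  singleton_mem : ∀ x ∈ V, {x} ∈ L
  empty_not_mem : ∅ ∉ L
  subset_top : ∀ C ∈ L, C ⊆ V
  laminar : ∀ C ∈ L, ∀ D ∈ L, C ⊆ D ∨ D ⊆ C ∨ Disjoint C D

noncomputable def children (L : Finset (Finset α)) (C : Finset α) : Finset (Finset α) :=
  {D ∈ L | D ⊂ C ∧ ∀ E ∈ L, D ⊂ E → ¬E ⊂ C}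

def IsBinary (L : Finset (Finset α)) : Prop :=
  ∀ C ∈ L, #(children L C) ≤ 2

variable {V C : Finset α} {L : Finset (Finset α)}

lemma children_subset : children L C ⊆ L := filter_subset _ _

lemma mem_children {D : Finset α} :
    D ∈ children L C ↔ D ∈ L ∧ D ⊂ C ∧ ∀ E ∈ L, D ⊂ E → ¬E ⊂ C := by
  simp only [children, mem_filter]

lemma exists_mem_children_superset {D : Finset α} (hD : D ∈ L) (hDC : D ⊂ C) :
    ∃ Q ∈ children L C, D ⊆ Q := by
  obtain ⟨Q, hQ, hmax⟩ := exists_max_image {E ∈ L | D ⊆ E ∧ E ⊂ C} card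
    ⟨D, mem_filter.2 ⟨hD, Subset.rfl, hDC⟩⟩
  obtain ⟨hQL, hDQ, hQC⟩ := mem_filter.1 hQ
  refine ⟨Q, mem_children.2 ⟨hQL, hQC, fun E hE hQE hEC => ?_⟩, hDQ⟩
  have := hmax E (mem_filter.2 ⟨hE, hDQ.trans hQE.subset, hEC⟩)
  exact (card_lt_card hQE).not_ge this

namespace IsHierarchy

lemma notMem_of_mem (hL : IsHierarchy V L) {E : Finset α} (hE : E ∈ L) {x : α} (hx : x ∉ V) :
    x ∉ E :=
  fun h => hx (hL.subset_top E hE h)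

lemma nonempty_of_mem (hL : IsHierarchy V L) {D : Finset α} (hD : D ∈ L) : D.Nonempty :=
  nonempty_iff_ne_empty.2 fun h => hL.empty_not_mem (h ▸ hD)

lemma pairwiseDisjoint_children (hL : IsHierarchy V L) :
    (children L C : Set (Finset α)).PairwiseDisjoint id := by
  intro A hA B hB hAB
  rw [mem_coe, mem_children] at hA hB
  rcases hL.laminar A hA.1 B hB.1 with h | h | h
  · exact absurd hB.2.1 (hA.2.2 B hB.1 (ssubset_of_subset_of_ne h hAB))
  · exact absurd hA.2.1 (hB.2.2 A hA.1 (ssubset_of_subset_of_ne h hAB.symm))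
  · exact h

lemma sup_children [DecidableEq α] (hL : IsHierarchy V L) (hC : C ∈ L)
    (hne : (children L C).Nonempty) : (children L C).sup id = C := by
  obtain ⟨Q, hQ⟩ := hne
  refine le_antisymm (Finset.sup_le fun D hD => (mem_children.1 hD).2.1.subset) fun x hx => ?_
  have hxC : {x} ⊂ C := by
    refine ssubset_of_subset_of_ne (singleton_subset_iff.2 hx) fun h => ?_
    have hQC := (mem_children.1 hQ).2.1
    rw [← h, ssubset_singleton_iff] at hQC
    exact hL.empty_not_mem (hQC ▸ (mem_children.1 hQ).1)
  obtain ⟨D, hD, hxD⟩ := exists_mem_children_superset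
    (hL.singleton_mem x (hL.subset_top C hC hx)) hxC
  exact mem_sup.2 ⟨D, hD, hxD (mem_singleton_self x)⟩

lemma insert_union_laminar [DecidableEq α] (hL : IsHierarchy V L) (hC : C ∈ L) {A B : Finset α}
    (hA : A ∈ children L C) (hB : B ∈ children L C) {D : Finset α} (hD : D ∈ L) :
    A ∪ B ⊆ D ∨ D ⊆ A ∪ B ∨ Disjoint (A ∪ B) D := by
  have hAC := (mem_children.1 hA).2.1.subset
  have hBC := (mem_children.1 hB).2.1.subset
  rcases hL.laminar C hC D hD with hCD | hDC | hCD
  · exact Or.inl (union_subset (hAC.trans hCD) (hBC.trans hCD))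
  · rcases eq_or_ne D C with rfl | hne
    · exact Or.inl (union_subset hAC hBC)
    obtain ⟨Q, hQ, hDQ⟩ := exists_mem_children_superset hD (ssubset_of_subset_of_ne hDC hne)
    by_cases hQA : Q = A
    · exact Or.inr (Or.inl (hQA ▸ hDQ |>.trans subset_union_left))
    by_cases hQB : Q = B
    · exact Or.inr (Or.inl (hQB ▸ hDQ |>.trans subset_union_right))
    refine Or.inr (Or.inr (disjoint_union_left.2 ⟨?_, ?_⟩))
    · exact (hL.pairwiseDisjoint_children hA hQ (Ne.symm hQA)).mono_right hDQ
    · exact (hL.pairwiseDisjoint_children hB hQ (Ne.symm hQB)).mono_right hDQ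
  · exact Or.inr (Or.inr (hCD.mono_left (union_subset hAC hBC)))

lemma insert_union [DecidableEq α] (hL : IsHierarchy V L) (hC : C ∈ L) {A B : Finset α}
    (hA : A ∈ children L C) (hB : B ∈ children L C) : IsHierarchy V (insert (A ∪ B) L) where
  top_mem := mem_insert_of_mem hL.top_mem
  singleton_mem x hx := mem_insert_of_mem (hL.singleton_mem x hx)
  empty_not_mem h := by
    rcases mem_insert.1 h with h | h
    · obtain ⟨x, hx⟩ := hL.nonempty_of_mem (mem_children.1 hA).1
      exact notMem_empty x (h ▸ mem_union_left B hx)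
    · exact hL.empty_not_mem h
  subset_top D hD := by
    rcases mem_insert.1 hD with rfl | hD
    · exact union_subset ((mem_children.1 hA).2.1.subset.trans (hL.subset_top C hC))
        ((mem_children.1 hB).2.1.subset.trans (hL.subset_top C hC))
    · exact hL.subset_top D hD
  laminar D hD E hE := by
    rcases mem_insert.1 hD with rfl | hD <;> rcases mem_insert.1 hE with rfl | hE
    · exact Or.inl Subset.rfl
    · exact hL.insert_union_laminar hC hA hB hE
    · rcases hL.insert_union_laminar hC hA hB hD with h | h | h
      exacts [Or.inr (Or.inl h), Or.inl h, Or.inr (Or.inr h.symm)]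
    · exact hL.laminar D hD E hE

lemma union_notMem [DecidableEq α] (hL : IsHierarchy V L) {A B Q : Finset α}
    (hA : A ∈ children L C) (hB : B ∈ children L C) (hQ : Q ∈ children L C)
    (hAB : A ≠ B) (hQA : Q ≠ A) (hQB : Q ≠ B) : A ∪ B ∉ L := by
  intro hM
  have hdisj := hL.pairwiseDisjoint_children (C := C)
  obtain ⟨b, hb⟩ := hL.nonempty_of_mem (mem_children.1 hB).1
  obtain ⟨q, hq⟩ := hL.nonempty_of_mem (mem_children.1 hQ).1
  refine (mem_children.1 hA).2.2 (A ∪ B) hM ?_ ?_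
  · refine ssubset_of_subset_of_ne subset_union_left fun h => ?_
    exact disjoint_left.1 (hdisj hA hB hAB) (h ▸ mem_union_right A hb) hb
  · refine ssubset_of_subset_of_ne (union_subset (mem_children.1 hA).2.1.subset
      (mem_children.1 hB).2.1.subset) fun h => ?_
    have hqAB : q ∈ A ∪ B := h ▸ (mem_children.1 hQ).2.1.subset hq
    rcases mem_union.1 hqAB with hqA | hqB
    · exact disjoint_left.1 (hdisj hQ hA hQA) hq hqA
    · exact disjoint_left.1 (hdisj hQ hB hQB) hq hqB

end IsHierarchy

section Blocks

variable [DecidableEq α] {K : Finset (Finset α)} {W : Finset α}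

lemma card_sup_inter_eq_sum {P : Finset (Finset α)}
    (hP : (P : Set (Finset α)).PairwiseDisjoint id) (W : Finset α) :
    #(P.sup id ∩ W) = ∑ Q ∈ P, #(Q ∩ W) := by
  rw [← inf_eq_inter, sup_inf_distrib_right, sup_eq_biUnion]
  exact card_biUnion (hP.mono fun Q => inter_subset_left)

lemma subset_of_sup_inter_subset (hK : (K : Set (Finset α)).PairwiseDisjoint id)
    {P P' : Finset (Finset α)} (hP : P ⊆ K) (hP' : P' ⊆ K) (hPW : ∀ Q ∈ P, (Q ∩ W).Nonempty)
    (h : P.sup id ∩ W ⊆ P'.sup id ∩ W) : P ⊆ P' := by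
  intro A hA
  obtain ⟨a, haA⟩ := hPW A hA
  obtain ⟨A', hA', haA'⟩ := mem_sup.1 (mem_inter.1 (h (inter_subset_inter_right
    (le_sup (f := id) hA) haA))).1
  by_contra hne
  have hAA' : A ≠ A' := fun h => hne (h ▸ hA')
  exact disjoint_left.1 (hK (hP hA) (hP' hA') hAA') (mem_inter.1 haA).1 haA'

lemma filter_card_sup_inter_eq_two (hK : (K : Set (Finset α)).PairwiseDisjoint id)
    (hQ : ∀ Q ∈ K, #(Q ∩ W) ≠ 2) :
    {P ∈ K.powersetCard 2 | #(P.sup id ∩ W) = 2} =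
      {Q ∈ K | #(Q ∩ W) = 1}.powersetCard 2 := by
  ext P
  simp only [mem_filter, mem_powersetCard]
  constructor
  · rintro ⟨⟨hPK, hP2⟩, h2⟩
    obtain ⟨A, B, hAB, rfl⟩ := card_eq_two.1 hP2
    have hA := hPK (mem_insert_self A {B})
    have hB := hPK (mem_insert_of_mem (mem_singleton_self B))
    rw [card_sup_inter_eq_sum (hK.subset hPK), sum_pair hAB] at h2
    have := hQ A hA
    have := hQ B hB
    exact ⟨insert_subset (mem_filter.2 ⟨hA, by omega⟩)
      (singleton_subset_iff.2 (mem_filter.2 ⟨hB, by omega⟩)), hP2⟩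
  · rintro ⟨hPK₁, hP2⟩
    have hPK := hPK₁.trans (filter_subset _ K)
    refine ⟨⟨hPK, hP2⟩, ?_⟩
    rw [card_sup_inter_eq_sum (hK.subset hPK),
      sum_congr rfl fun Q hQ => (mem_filter.1 (hPK₁ hQ)).2]
    simp [hP2]

lemma card_filter_inter_eq_one_ne_two (hK : (K : Set (Finset α)).PairwiseDisjoint id)
    (hW : #W ≤ 4) (hQ : ∀ Q ∈ K, #(Q ∩ W) ≠ 2) (hKW : #(K.sup id ∩ W) ≠ 2) :
    #{Q ∈ K | #(Q ∩ W) = 1} ≠ 2 := by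
  intro hm
  have htot := card_sup_inter_eq_sum hK W
  rw [← sum_filter_add_sum_filter_not K fun Q => #(Q ∩ W) = 1,
    sum_congr rfl fun Q hQ => (mem_filter.1 hQ).2, sum_const, hm, smul_eq_mul, mul_one] at htot
  have hle : #(K.sup id ∩ W) ≤ 4 := (card_le_card inter_subset_right).trans hW
  -- the other blocks meet `W` in no point or in at least three, one too many
  obtain ⟨Q, hQr, hQ0⟩ := exists_ne_zero_of_sum_ne_zero (s := {Q ∈ K | ¬#(Q ∩ W) = 1})
    (f := fun Q => #(Q ∩ W)) (by omega)
  have := single_le_sum (f := fun Q => #(Q ∩ W)) (fun _ _ => Nat.zero_le _) hQr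
  have := hQ Q (mem_filter.1 hQr).1
  have := (mem_filter.1 hQr).2
  omega

lemma three_mul_le_choose_two {b m : ℕ} (hb : 2 * b ≤ m) (hm : m ≠ 2) : 3 * b ≤ m.choose 2 := by
  match m, hb, hm with
  | 0, hb, _ | 1, hb, _ => omega
  | 3, hb, _ =>
    have : Nat.choose 3 2 = 3 := by decide
    omega
  | m + 4, hb, _ =>
    rw [Nat.choose_two_right, Nat.le_div_iff_mul_le two_pos]
    push_cast
    nlinarith

/-- Pairs of blocks whose union traces `F`'s split of `W` are pairwise disjoint, since two
such traces sharing a point coincide; so they are at most half as many as the blocks meeting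
`W` once, which is at most a third of the pairs of those blocks. -/
lemma three_mul_card_sameSplit_le (hK : (K : Set (Finset α)).PairwiseDisjoint id) {F : Finset α}
    (hW : #W ≤ 4) (hQ : ∀ Q ∈ K, #(Q ∩ W) ≠ 2) (hKW : #(K.sup id ∩ W) ≠ 2) :
    3 * #{P ∈ K.powersetCard 2 | #(P.sup id ∩ W) = 2 ∧ SameSplit W F (P.sup id ∩ W)} ≤
      #{P ∈ K.powersetCard 2 | #(P.sup id ∩ W) = 2} := by
  set K₁ := {Q ∈ K | #(Q ∩ W) = 1}
  have hK₁ : ∀ Q ∈ K₁, Q ∈ K ∧ (Q ∩ W).Nonempty := fun Q hQ =>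
    ⟨(mem_filter.1 hQ).1, card_pos.1 (by rw [(mem_filter.1 hQ).2]; exact one_pos)⟩
  set Bad := {P ∈ K₁.powersetCard 2 | SameSplit W F (P.sup id ∩ W)}
  have hBad : ∀ P ∈ Bad, P ⊆ K₁ := fun P hP => (mem_powersetCard.1 (mem_filter.1 hP).1).1
  have hBad_disj : (Bad : Set (Finset (Finset α))).PairwiseDisjoint id := by
    intro P hP P' hP' hne
    rw [mem_coe] at hP hP'
    refine disjoint_left.2 fun Q hQP hQP' => hne ?_
    have hsub : ∀ P ∈ Bad, P ⊆ K := fun P hP A hA => (hK₁ A (hBad P hP hA)).1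
    have heq : P.sup id ∩ W = P'.sup id ∩ W := by
      by_contra hne'
      obtain ⟨q, hq⟩ := (hK₁ Q (hBad P hP hQP)).2
      exact disjoint_left.1 (SameSplit.disjoint_of_ne inter_subset_right inter_subset_right
        (mem_filter.1 hP).2 (mem_filter.1 hP').2 hne')
        (inter_subset_inter_right (le_sup (f := id) hQP) hq)
        (inter_subset_inter_right (le_sup (f := id) hQP') hq)
    exact Subset.antisymm
      (subset_of_sup_inter_subset hK (hsub P hP) (hsub P' hP')
        (fun A hA => (hK₁ A (hBad P hP hA)).2) heq.le)
      (subset_of_sup_inter_subset hK (hsub P' hP') (hsub P hP)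
        (fun A hA => (hK₁ A (hBad P' hP' hA)).2) heq.ge)
  have hBad_card : 2 * #Bad ≤ #K₁ := by
    calc 2 * #Bad = ∑ P ∈ Bad, #(P ∩ K₁) := by
          rw [sum_congr rfl fun P hP => by
            rw [inter_eq_left.2 (hBad P hP), (mem_powersetCard.1 (mem_filter.1 hP).1).2]]
          simp [mul_comm]
      _ = #(Bad.sup id ∩ K₁) := (card_sup_inter_eq_sum hBad_disj K₁).symm
      _ ≤ #K₁ := card_le_card inter_subset_right
  rw [← filter_filter, filter_card_sup_inter_eq_two hK hQ, card_powersetCard]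
  exact three_mul_le_choose_two hBad_card (card_filter_inter_eq_one_ne_two hK hW hQ hKW)

end Blocks

namespace IsHierarchy

variable [DecidableEq α] {ι : Type*}

lemma exists_pair_children_three_mul_le (hL : IsHierarchy V L) (hC : C ∈ L)
    (h3 : 3 ≤ #(children L C)) (R : Finset ι) (W F : ι → Finset α)
    (hR : ∀ i ∈ R, #(W i) ≤ 4 ∧ ∀ D ∈ L, #(D ∩ W i) ≠ 2) :
    ∃ P ∈ (children L C).powersetCard 2,
      3 * #{i ∈ R | #(P.sup id ∩ W i) = 2 ∧ SameSplit (W i) (F i) (P.sup id ∩ W i)} ≤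
        #{i ∈ R | #(P.sup id ∩ W i) = 2} := by
  have hsup := hL.sup_children hC (card_pos.1 (by omega))
  have hswap : ∀ (r : ι → Finset (Finset α) → Prop) [∀ i P, Decidable (r i P)],
      ∑ P ∈ (children L C).powersetCard 2, #{i ∈ R | r i P} =
        ∑ i ∈ R, #{P ∈ (children L C).powersetCard 2 | r i P} := fun r _ => by
    simp only [card_filter]
    exact sum_comm
  refine exists_le_of_sum_le (powersetCard_nonempty.2 (by omega)) ?_
  rw [← mul_sum, hswap fun i P => #(P.sup id ∩ W i) = 2 ∧
    SameSplit (W i) (F i) (P.sup id ∩ W i), hswap fun i P => #(P.sup id ∩ W i) = 2, mul_sum]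
  refine sum_le_sum fun i hi => three_mul_card_sameSplit_le hL.pairwiseDisjoint_children
    (hR i hi).1 (fun Q hQ => (hR i hi).2 Q (children_subset hQ)) ?_
  rw [hsup]
  exact (hR i hi).2 C hC

lemma exists_merge (hL : IsHierarchy V L) (hC : C ∈ L) (h3 : 3 ≤ #(children L C))
    (R : Finset ι) (W F : ι → Finset α)
    (hR : ∀ i ∈ R, #(W i) ≤ 4 ∧ ∀ D ∈ L, #(D ∩ W i) ≠ 2) :
    ∃ M ∈ V.powerset \ L, IsHierarchy V (insert M L) ∧
      3 * #{i ∈ R | #(M ∩ W i) = 2 ∧ SameSplit (W i) (F i) (M ∩ W i)} ≤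
        #{i ∈ R | #(M ∩ W i) = 2} := by
  obtain ⟨P, hP, hcount⟩ := hL.exists_pair_children_three_mul_le hC h3 R W F hR
  obtain ⟨hPK, hP2⟩ := mem_powersetCard.1 hP
  obtain ⟨A, B, hAB, rfl⟩ := card_eq_two.1 hP2
  have hA := hPK (mem_insert_self A {B})
  have hB := hPK (mem_insert_of_mem (mem_singleton_self B))
  obtain ⟨Q, hQ, hQAB⟩ := exists_mem_notMem_of_card_lt_card (s := {A, B}) (t := children L C)
    (by rw [card_pair hAB]; omega)
  have hQA : Q ≠ A := fun h => hQAB (by simp [h])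
  have hQB : Q ≠ B := fun h => hQAB (by simp [h])
  simp only [sup_insert, sup_singleton, id, sup_eq_union] at hcount
  have hM := hL.insert_union hC hA hB
  exact ⟨A ∪ B, mem_sdiff.2 ⟨mem_powerset.2 (hM.subset_top _ (mem_insert_self _ L)),
    hL.union_notMem hA hB hQ hAB hQA hQB⟩, hM, hcount⟩

theorem exists_binary_refinement (hL : IsHierarchy V L) (R : Finset ι) (W F : ι → Finset α)
    (hR : ∀ i ∈ R, #(W i) ≤ 4 ∧ ∀ C ∈ L, #(C ∩ W i) ≠ 2) :
    ∃ L', IsHierarchy V L' ∧ IsBinary L' ∧ L ⊆ L' ∧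
      3 * #{i ∈ R | ∃ E ∈ L', #(E ∩ W i) = 2 ∧ SameSplit (W i) (F i) (E ∩ W i)} ≤
        #R := by
  obtain ⟨k, hk⟩ : ∃ k, #(V.powerset \ L) = k := ⟨_, rfl⟩
  induction k using Nat.strong_induction_on generalizing L R with
  | _ k ih =>
  by_cases hbin : IsBinary L
  · refine ⟨L, hL, hbin, Subset.rfl, ?_⟩
    rw [filter_false_of_mem fun i hi ⟨E, hE, h2, _⟩ => (hR i hi).2 E hE h2]
    simp
  simp only [IsBinary, not_forall, not_le] at hbin
  obtain ⟨C, hC, h3⟩ := hbin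
  obtain ⟨M, hM, hLM, hcount⟩ := hL.exists_merge hC h3 R W F hR
  set R₀ := {i ∈ R | ¬#(M ∩ W i) = 2}
  obtain ⟨L', hL', hbin', hsub, hbound⟩ := ih _ (hk ▸ by
      rw [sdiff_insert]
      exact card_erase_lt_of_mem hM) hLM R₀ (fun i hi => by
      obtain ⟨hiR, hi2⟩ := mem_filter.1 hi
      refine ⟨(hR i hiR).1, fun D hD => ?_⟩
      rcases mem_insert.1 hD with rfl | hD
      exacts [hi2, (hR i hiR).2 D hD]) rfl
  refine ⟨L', hL', hbin', (subset_insert M L).trans hsub, ?_⟩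
  have hsplit : {i ∈ R | ∃ E ∈ L', #(E ∩ W i) = 2 ∧ SameSplit (W i) (F i) (E ∩ W i)} ⊆
      {i ∈ R | #(M ∩ W i) = 2 ∧ SameSplit (W i) (F i) (M ∩ W i)} ∪
        {i ∈ R₀ | ∃ E ∈ L', #(E ∩ W i) = 2 ∧ SameSplit (W i) (F i) (E ∩ W i)} := by
    intro i hi
    obtain ⟨hiR, E, hE, hE2, hEF⟩ := mem_filter.1 hi
    by_cases hM2 : #(M ∩ W i) = 2
    · exact mem_union_left _ (mem_filter.2 ⟨hiR, hM2, hEF.of_inter_card_eq_two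
        (hL'.laminar E hE M (hsub (mem_insert_self M L))) (hR i hiR).1 hE2 hM2⟩)
    · exact mem_union_right _ (mem_filter.2 ⟨mem_filter.2 ⟨hiR, hM2⟩, E, hE, hE2, hEF⟩)
  have := card_le_card hsplit
  have := card_union_le {i ∈ R | #(M ∩ W i) = 2 ∧ SameSplit (W i) (F i) (M ∩ W i)}
    {i ∈ R₀ | ∃ E ∈ L', #(E ∩ W i) = 2 ∧ SameSplit (W i) (F i) (E ∩ W i)}
  have : #{i ∈ R | #(M ∩ W i) = 2} + #R₀ = #R := card_filter_add_card_filter_not _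
  omega

lemma exists_inter_card_eq_two (hL : IsHierarchy V L) (hB : IsBinary L) {W : Finset α}
    (hWV : W ⊆ V) (hW : 2 ≤ #W) : ∃ C ∈ L, #(C ∩ W) = 2 := by
  obtain ⟨C, hC, hmin⟩ := exists_min_image {C ∈ L | 2 ≤ #(C ∩ W)} card
    ⟨V, mem_filter.2 ⟨hL.top_mem, by rwa [inter_eq_right.2 hWV]⟩⟩
  obtain ⟨hCL, hC2⟩ := mem_filter.1 hC
  refine ⟨C, hCL, le_antisymm ?_ hC2⟩
  have hchild : ∀ Q ∈ children L C, #(Q ∩ W) ≤ 1 := fun Q hQ => by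
    by_contra h
    exact (card_lt_card (mem_children.1 hQ).2.1).not_ge
      (hmin Q (mem_filter.2 ⟨(mem_children.1 hQ).1, by omega⟩))
  have hne : (children L C).Nonempty := by
    obtain ⟨x, hx⟩ := card_pos.1 (lt_of_lt_of_le two_pos hC2)
    have hxC := (mem_inter.1 hx).1
    refine (exists_mem_children_superset (hL.singleton_mem x (hL.subset_top C hCL hxC))
      (ssubset_of_subset_of_ne (singleton_subset_iff.2 hxC) fun h => ?_)).imp fun Q hQ => hQ.1
    have h1 : #C = 1 := by rw [← h, card_singleton]
    have := card_le_card (inter_subset_left : C ∩ W ⊆ C)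
    omega
  rw [← hL.sup_children hCL hne, card_sup_inter_eq_sum hL.pairwiseDisjoint_children]
  calc ∑ Q ∈ children L C, #(Q ∩ W) ≤ ∑ Q ∈ children L C, 1 := sum_le_sum hchild
    _ ≤ 2 := by simpa using hB C hCL

end IsHierarchy

end Hierarchy

section Counting

lemma three_mul_card_add_le {β : Type*} [DecidableEq β] {D R S : Finset β} (p : β → Prop)
    [DecidablePred p] (hD : D ⊆ S) (hR : {x ∈ R | ¬p x} ⊆ S) (hDR : Disjoint D R)
    (hp : 3 * #{x ∈ R | p x} ≤ #R) : 3 * #D + 2 * #R ≤ 3 * #S := by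
  have hdisj : Disjoint D {x ∈ R | ¬p x} := hDR.mono_right (filter_subset _ _)
  have := card_le_card (union_subset hD hR)
  rw [card_union_of_disjoint hdisj] at this
  have := card_filter_add_card_filter_not (s := R) fun x => p x
  omega

variable {ι κ : Type*} [Finite ι] [Finite κ] (d : ι → κ → ℝ)

lemma max_iSup_iInf_le [Nonempty ι] [Nonempty κ] {B : ℝ} (h : ∀ i j, d i j ≤ B) :
    max (⨆ i, ⨅ j, d i j) (⨆ j, ⨅ i, d i j) ≤ B := by
  obtain ⟨i₀⟩ := ‹Nonempty ι›
  obtain ⟨j₀⟩ := ‹Nonempty κ›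
  refine max_le (ciSup_le fun i => ?_) (ciSup_le fun j => ?_)
  · exact (ciInf_le (Set.finite_range _).bddBelow j₀).trans (h i j₀)
  · exact (ciInf_le (Set.finite_range _).bddBelow i₀).trans (h i₀ j)

lemma le_max_iSup_iInf [Nonempty ι] [Nonempty κ] {a b : ℝ} (ha : ∃ i, ∀ j, a ≤ d i j)
    (hb : ∃ j, ∀ i, b ≤ d i j) : max a b ≤ max (⨆ i, ⨅ j, d i j) (⨆ j, ⨅ i, d i j) := by
  obtain ⟨i, hi⟩ := ha
  obtain ⟨j, hj⟩ := hb
  exact max_le_max (le_ciSup_of_le (Set.finite_range _).bddAbove i (le_ciInf hi))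
    (le_ciSup_of_le (Set.finite_range _).bddAbove j (le_ciInf hj))

lemma parametric_bounds {D R₁ R₂ U H β p : ℝ} (hD : 0 ≤ D) (hR₁ : 0 ≤ R₁) (hR₂ : 0 ≤ R₂)
    (hβ : 0 < β) (hp0 : 0 < p) (hp1 : p ≤ 1) (hU : U ≤ β * (D + R₁ + R₂))
    (hlow : max (D + 2 / 3 * R₂) (D + 2 / 3 * R₁) ≤ H) (hup : H ≤ D + R₁ + R₂ + U) :
    1 / 3 * (D + p * (R₁ + R₂)) ≤ H ∧ H ≤ (1 + β) / p * (D + p * (R₁ + R₂)) := by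
  have h₁ := (le_max_left _ _).trans hlow
  have h₂ := (le_max_right _ _).trans hlow
  constructor
  · nlinarith
  · rw [div_mul_eq_mul_div, le_div_iff₀ hp0]
    nlinarith [mul_le_mul_of_nonneg_left hp1 hD]

end Counting

lemma mem_triplets {n : ℕ} {X : Finset (Fin n)} : X ∈ triplets n ↔ #X = 3 := by
  simp [triplets, mem_powersetCard]

namespace RTree

variable {n : ℕ}

lemma isHierarchy (T : RTree n) : IsHierarchy univ T.clusters where
  top_mem := T.univ_mem
  singleton_mem x _ := T.singleton_mem x
  empty_not_mem := T.empty_not_mem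
  subset_top _ _ := subset_univ _
  laminar C hC D hD := (T.laminar C hC D hD).imp_right
    (Or.imp_right disjoint_iff_inter_eq_empty.2)

def ofHierarchy (L : Finset (Finset (Fin n))) (hL : IsHierarchy univ L) : RTree n where
  clusters := L
  univ_mem := hL.top_mem
  singleton_mem x := hL.singleton_mem x (mem_univ x)
  empty_not_mem := hL.empty_not_mem
  laminar C hC D hD := (hL.laminar C hC D hD).imp_right
    (Or.imp_right disjoint_iff_inter_eq_empty.1)

lemma Resolved.mono {T t : RTree n} (h : T.clusters ⊆ t.clusters) {X : Finset (Fin n)}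
    (hX : T.Resolved X) : t.Resolved X :=
  let ⟨C, hC, h2⟩ := hX
  ⟨C, h hC, h2⟩

lemma mem_restrict {T : RTree n} {X P : Finset (Fin n)} :
    P ∈ T.restrict X ↔ (∃ C ∈ T.clusters, C ∩ X = P) ∧ P ≠ ∅ := by
  simp [restrict, famRestrict]

lemma restrict_eq_of_subset {T t : RTree n} (h : T.clusters ⊆ t.clusters) {X : Finset (Fin n)}
    (hX : X ∈ triplets n) (hres : T.Resolved X) : t.restrict X = T.restrict X := by
  obtain ⟨C, hC, hC2⟩ := hres
  ext P
  simp only [mem_restrict]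
  refine ⟨fun ⟨⟨D, hD, hDP⟩, hP⟩ => ⟨?_, hP⟩, fun ⟨⟨D, hD, hDP⟩, hP⟩ => ⟨⟨D, h hD, hDP⟩, hP⟩⟩
  subst hDP
  have hX3 := mem_triplets.1 hX
  have hle : #(D ∩ X) ≤ 3 := hX3 ▸ card_le_card inter_subset_right
  have hpos : 0 < #(D ∩ X) := card_pos.2 (nonempty_iff_ne_empty.2 hP)
  interval_cases hcard : #(D ∩ X)
  · obtain ⟨x, hx⟩ := card_eq_one.1 hcard
    refine ⟨{x}, T.singleton_mem x, ?_⟩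
    rw [hx, singleton_inter_of_mem (mem_inter.1 (hx ▸ mem_singleton_self x)).2]
  · rcases inter_eq_or_eq_sdiff (t.isHierarchy.laminar D hD C (h hC)) (by omega)
      hcard hC2 with he | he
    · exact ⟨C, hC, he.symm⟩
    · rw [he, card_sdiff] at hcard
      omega
  · exact ⟨univ, T.univ_mem, by rw [univ_inter]; exact (eq_of_subset_of_card_le
      inter_subset_right (by omega)).symm⟩

lemma setD_comm (T₁ T₂ : RTree n) : setD T₁ T₂ = setD T₂ T₁ :=
  filter_congr fun _ _ => by
    rw [← and_assoc, and_comm (a := famResolved _ _), and_assoc, ne_comm]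

lemma mem_setD_iff_of_fullRef {T₁ T₂ t₁ t₂ : RTree n} (h₁ : t₁ ∈ T₁.FullRef)
    (h₂ : t₂ ∈ T₂.FullRef) {X : Finset (Fin n)} (hX : X ∈ triplets n) (hX₁ : T₁.Resolved X)
    (hX₂ : T₂.Resolved X) : X ∈ setD t₁ t₂ ↔ X ∈ setD T₁ T₂ := by
  have e₁ := restrict_eq_of_subset h₁.2 hX hX₁
  have e₂ := restrict_eq_of_subset h₂.2 hX hX₂
  simp only [setD, famSetD, mem_filter]
  exact ⟨fun h => ⟨hX, hX₁, hX₂, fun h' => h.2.2.2 (e₁.trans (h'.trans e₂.symm))⟩,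
    fun h => ⟨hX, h₁.1 X hX, h₂.1 X hX, fun h' => h.2.2.2 (e₁.symm.trans (h'.trans e₂))⟩⟩

lemma card_setD_le_of_fullRef {T₁ T₂ t₁ t₂ : RTree n} (h₁ : t₁ ∈ T₁.FullRef)
    (h₂ : t₂ ∈ T₂.FullRef) : #(setD t₁ t₂) ≤ #(setD T₁ T₂) + #(setR1 T₁ T₂) +
      #(setR2 T₁ T₂) + #(setU T₁ T₂) := by
  have hsub : setD t₁ t₂ ⊆ setD T₁ T₂ ∪ setR1 T₁ T₂ ∪ setR2 T₁ T₂ ∪ setU T₁ T₂ := by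
    intro X hX
    have hXt : X ∈ triplets n := (mem_filter.1 hX).1
    simp only [setR1, setR2, setU, famSetR1, famSetR2, famSetU, mem_union, mem_filter]
    by_cases hX₁ : T₁.Resolved X <;> by_cases hX₂ : T₂.Resolved X
    · exact Or.inl (Or.inl (Or.inl ((mem_setD_iff_of_fullRef h₁ h₂ hXt hX₁ hX₂).1 hX)))
    all_goals simp_all [Resolved]
  have := card_le_card hsub
  have := card_union_le (setD T₁ T₂ ∪ setR1 T₁ T₂ ∪ setR2 T₁ T₂) (setU T₁ T₂)
  have := card_union_le (setD T₁ T₂ ∪ setR1 T₁ T₂) (setR2 T₁ T₂)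
  have := card_union_le (setD T₁ T₂) (setR1 T₁ T₂)
  omega

lemma inter_eq_or_eq_sdiff_of_restrict_eq {t₁ t₂ : RTree n} {X E G : Finset (Fin n)}
    (hX : X ∈ triplets n) (h : t₁.restrict X = t₂.restrict X) (hE : E ∈ t₁.clusters)
    (hE2 : #(E ∩ X) = 2) (hG : G ∈ t₂.clusters) (hG2 : #(G ∩ X) = 2) :
    E ∩ X = G ∩ X ∨ E ∩ X = X \ G := by
  have hEX : E ∩ X ∈ t₂.restrict X :=
    h ▸ mem_restrict.2 ⟨⟨E, hE, rfl⟩, nonempty_iff_ne_empty.1 (card_pos.1 (by omega))⟩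
  obtain ⟨⟨D, hD, hDE⟩, -⟩ := mem_restrict.1 hEX
  rw [← hDE] at hE2 ⊢
  exact inter_eq_or_eq_sdiff (t₂.isHierarchy.laminar D hD G hG)
    (by rw [mem_triplets.1 hX]; omega) hE2 hG2

lemma exists_fullRef_three_mul_le (T₁ T₂ : RTree n) :
    ∃ t₁ ∈ T₁.FullRef, ∀ t₂ ∈ T₂.FullRef,
      3 * #(setD T₁ T₂) + 2 * #(setR2 T₁ T₂) ≤ 3 * #(setD t₁ t₂) := by
  have hR : ∀ X ∈ setR2 T₁ T₂, X ∈ triplets n ∧ T₂.Resolved X ∧ ¬T₁.Resolved X :=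
    fun X hX => mem_filter.1 hX
  choose! g hg hg2 using fun X hX => (hR X hX).2.1
  obtain ⟨L, hL, hbin, hsub, hcount⟩ := T₁.isHierarchy.exists_binary_refinement
    (setR2 T₁ T₂) id (fun X => g X ∩ X) fun X hX => ⟨by simp [mem_triplets.1 (hR X hX).1],
      fun C hC h2 => (hR X hX).2.2 ⟨C, hC, h2⟩⟩
  have ht₁ : ofHierarchy L hL ∈ T₁.FullRef := ⟨fun X hX =>
    hL.exists_inter_card_eq_two hbin (subset_univ X) (by rw [mem_triplets.1 hX]; omega), hsub⟩
  refine ⟨ofHierarchy L hL, ht₁, fun t₂ ht₂ => ?_⟩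
  refine three_mul_card_add_le _ (fun X hX => ?_) (fun X hX => ?_) ?_ hcount
  · have hX' := mem_filter.1 hX
    exact (mem_setD_iff_of_fullRef ht₁ ht₂ hX'.1 hX'.2.1 hX'.2.2.1).2 hX
  · obtain ⟨hXR, hgood⟩ := mem_filter.1 hX
    obtain ⟨hXt, hX₂, -⟩ := hR X hXR
    obtain ⟨E, hE, hE2⟩ := ht₁.1 X hXt
    refine mem_filter.2 ⟨hXt, ⟨E, hE, hE2⟩, hX₂.mono ht₂.2, fun heq => hgood ⟨E, hE, hE2, ?_⟩⟩
    rcases inter_eq_or_eq_sdiff_of_restrict_eq hXt heq hE hE2 (ht₂.2 (hg X hXR)) (hg2 X hXR)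
      with h | h
    · exact Or.inl h
    · exact h ▸ sameSplit_sdiff X (g X)
  · exact disjoint_filter.2 fun X _ hD hR2 => hR2.2 hD.1

lemma fullRef_nonempty (T : RTree n) : T.FullRef.Nonempty :=
  let ⟨t, ht, _⟩ := exists_fullRef_three_mul_le T T
  ⟨t, ht⟩

lemma dHaus_le (T₁ T₂ : RTree n) :
    dHaus T₁ T₂ ≤ (#(setD T₁ T₂) : ℝ) + #(setR1 T₁ T₂) + #(setR2 T₁ T₂) +
      #(setU T₁ T₂) := by
  have := T₁.fullRef_nonempty.to_subtype
  have := T₂.fullRef_nonempty.to_subtype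
  refine max_iSup_iInf_le _ fun t₁ t₂ => ?_
  rw [tripletDist]
  exact_mod_cast card_setD_le_of_fullRef t₁.2 t₂.2

lemma le_dHaus (T₁ T₂ : RTree n) :
    max (#(setD T₁ T₂) + 2 / 3 * (#(setR2 T₁ T₂) : ℝ))
      (#(setD T₁ T₂) + 2 / 3 * (#(setR1 T₁ T₂) : ℝ)) ≤ dHaus T₁ T₂ := by
  have := T₁.fullRef_nonempty.to_subtype
  have := T₂.fullRef_nonempty.to_subtype
  obtain ⟨t₁, ht₁, h₁⟩ := exists_fullRef_three_mul_le T₁ T₂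
  obtain ⟨t₂, ht₂, h₂⟩ := exists_fullRef_three_mul_le T₂ T₁
  refine le_max_iSup_iInf _ ⟨⟨t₁, ht₁⟩, fun s₂ => ?_⟩ ⟨⟨t₂, ht₂⟩, fun s₁ => ?_⟩
  · have : (3 * #(setD T₁ T₂) + 2 * #(setR2 T₁ T₂) : ℝ) ≤ 3 * #(setD t₁ s₂.1) := by
      exact_mod_cast h₁ s₂.1 s₂.2
    rw [tripletDist]
    linarith
  · have : (3 * #(setD T₁ T₂) + 2 * #(setR1 T₁ T₂) : ℝ) ≤ 3 * #(setD s₁.1 t₂) := by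
      rw [setD_comm T₁, setD_comm s₁.1]
      exact_mod_cast h₂ s₁.1 s₁.2
    rw [tripletDist]
    linarith

end RTree

section Splits

variable {α : Type*} [Fintype α] [DecidableEq α]

def SplitCompatible (A B : Finset α) : Prop :=
  A ⊆ B ∨ B ⊆ A ∨ A ∩ B = ∅ ∨ A ∪ B = univ

lemma SplitCompatible.symm {A B : Finset α} (h : SplitCompatible A B) : SplitCompatible B A := by
  rcases h with h | h | h | h
  exacts [Or.inr (Or.inl h), Or.inl h, Or.inr (Or.inr (Or.inl (inter_comm A B ▸ h))),
    Or.inr (Or.inr (Or.inr (union_comm A B ▸ h)))]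

lemma SplitCompatible.compl_left {A B : Finset α} (h : SplitCompatible A B) :
    SplitCompatible (univ \ A) B := by
  rcases h with h | h | h | h
  · refine Or.inr (Or.inr (Or.inr (eq_univ_of_forall fun x => ?_)))
    by_cases hx : x ∈ A
    exacts [mem_union_right _ (h hx), mem_union_left _ (mem_sdiff.2 ⟨mem_univ x, hx⟩)]
  · exact Or.inr (Or.inr (Or.inl (eq_empty_of_forall_notMem fun x hx =>
      (mem_sdiff.1 (mem_inter.1 hx).1).2 (h (mem_inter.1 hx).2))))
  · exact Or.inr (Or.inl fun x hx => mem_sdiff.2 ⟨mem_univ x, fun hxA =>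
      notMem_empty x (h ▸ mem_inter.2 ⟨hxA, hx⟩)⟩)
  · exact Or.inl fun x hx => (mem_union.1 (h ▸ mem_univ x)).resolve_left (mem_sdiff.1 hx).2

lemma SplitCompatible.inter_eq_or_eq_sdiff {A B W : Finset α} (h : SplitCompatible A B)
    (hW : #W = 4) (hA : #(A ∩ W) = 2) (hB : #(B ∩ W) = 2) :
    A ∩ W = B ∩ W ∨ A ∩ W = W \ B := by
  rcases h with h | h | h | h
  · exact Finset.inter_eq_or_eq_sdiff (Or.inl h) hW.le hA hB
  · exact Finset.inter_eq_or_eq_sdiff (Or.inr (Or.inl h)) hW.le hA hB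
  · exact Finset.inter_eq_or_eq_sdiff (Or.inr (Or.inr (disjoint_iff_inter_eq_empty.2 h))) hW.le
      hA hB
  · have hBc : univ \ B ⊆ A := fun x hx =>
      (mem_union.1 (h ▸ mem_univ x)).resolve_right (mem_sdiff.1 hx).2
    have hW' : (univ \ B) ∩ W = W \ B := by ext; simp [and_comm]
    have := card_sdiff_add_card_inter W B
    rw [inter_comm W B] at this
    rw [← hW']
    exact Or.inr (inter_eq_of_subset_of_card_eq hBc (by rw [hW']; omega)).symm

end Splits

lemma mem_quartets {n : ℕ} {X : Finset (Fin n)} : X ∈ quartets n ↔ #X = 4 := by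
  simp [quartets, mem_powersetCard]

namespace UTree

variable {n : ℕ}

lemma isHierarchy_rootAt (T : UTree n) {x₀ : Fin n} (hn : 2 ≤ n) :
    IsHierarchy (univ.erase x₀) {A ∈ T.splits | x₀ ∉ A} where
  top_mem := by
    have hx₀ : ({x₀} : Finset (Fin n)) ≠ univ := fun h => by
      have := congrArg card h
      simp only [card_singleton, card_univ, Fintype.card_fin] at this
      omega
    refine mem_filter.2 ⟨?_, notMem_erase x₀ univ⟩
    rw [erase_eq]
    exact T.compl_mem _ ((T.trivial_mem x₀).resolve_left hx₀)
  singleton_mem x hx := by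
    have hxx₀ := ne_of_mem_erase hx
    refine mem_filter.2 ⟨(T.trivial_mem x).resolve_left fun h => ?_, by simpa using hxx₀.symm⟩
    exact hxx₀ (mem_singleton.1 (h ▸ mem_univ x₀)).symm
  empty_not_mem h := T.empty_not_mem (mem_filter.1 h).1
  subset_top A hA x hx := mem_erase.2 ⟨fun h => (mem_filter.1 hA).2 (h ▸ hx), mem_univ x⟩
  laminar A hA B hB := by
    obtain ⟨hA, hxA⟩ := mem_filter.1 hA
    obtain ⟨hB, hxB⟩ := mem_filter.1 hB
    rcases T.compat A hA B hB with h | h | h | h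
    · exact Or.inl h
    · exact Or.inr (Or.inl h)
    · exact Or.inr (Or.inr (disjoint_iff_inter_eq_empty.2 h))
    · exact absurd ((mem_union.1 (h ▸ mem_univ x₀)).resolve_left hxA) hxB

def ofHierarchy (x₀ : Fin n) (L : Finset (Finset (Fin n)))
    (hL : IsHierarchy (univ.erase x₀) L) : UTree n where
  splits := L ∪ L.image (univ \ ·)
  empty_not_mem h := by
    rcases mem_union.1 h with h | h
    · exact hL.empty_not_mem h
    · obtain ⟨A, hA, hA'⟩ := mem_image.1 h
      have hx₀ : x₀ ∈ univ \ A :=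
        mem_sdiff.2 ⟨mem_univ x₀, hL.notMem_of_mem hA (notMem_erase x₀ univ)⟩
      exact notMem_empty x₀ (hA' ▸ hx₀)
  trivial_mem x := by
    refine Or.inr ?_
    by_cases hx : x = x₀
    · refine mem_union_right _ (mem_image.2 ⟨_, hL.top_mem, ?_⟩)
      ext y
      simp [hx]
    · exact mem_union_left _ (hL.singleton_mem x (mem_erase.2 ⟨hx, mem_univ x⟩))
  compl_mem A hA := by
    rcases mem_union.1 hA with hA | hA
    · exact mem_union_right _ (mem_image_of_mem _ hA)
    · obtain ⟨B, hB, rfl⟩ := mem_image.1 hA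
      rw [Finset.sdiff_sdiff_eq_self (subset_univ B)]
      exact mem_union_left _ hB
  compat A hA B hB := by
    have base : ∀ A ∈ L, ∀ B ∈ L, SplitCompatible A B := fun A hA B hB => by
      rcases hL.laminar A hA B hB with h | h | h
      exacts [Or.inl h, Or.inr (Or.inl h), Or.inr (Or.inr (Or.inl
        (disjoint_iff_inter_eq_empty.1 h)))]
    show SplitCompatible A B
    rcases mem_union.1 hA with hA | hA <;> rcases mem_union.1 hB with hB | hB
    · exact base A hA B hB
    · obtain ⟨B', hB', rfl⟩ := mem_image.1 hB
      exact (base B' hB' A hA).compl_left.symm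
    · obtain ⟨A', hA', rfl⟩ := mem_image.1 hA
      exact (base A' hA' B hB).compl_left
    · obtain ⟨A', hA', rfl⟩ := mem_image.1 hA
      obtain ⟨B', hB', rfl⟩ := mem_image.1 hB
      exact ((base B' hB' A' hA').compl_left.symm).compl_left

lemma Resolved.mono {T t : UTree n} (h : T.splits ⊆ t.splits) {X : Finset (Fin n)}
    (hX : T.Resolved X) : t.Resolved X :=
  let ⟨C, hC, h2⟩ := hX
  ⟨C, h hC, h2⟩

lemma mem_restrict {T : UTree n} {X P : Finset (Fin n)} :
    P ∈ T.restrict X ↔ (∃ A ∈ T.splits, A ∩ X = P) ∧ P ≠ ∅ ∧ P ≠ X := by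
  simp [restrict, famRestrictU]

lemma singleton_mem_splits (T : UTree n) {X : Finset (Fin n)} (hX : X ∈ quartets n)
    (x : Fin n) : {x} ∈ T.splits := by
  refine (T.trivial_mem x).resolve_left fun h => ?_
  have := card_le_card (subset_univ X)
  rw [← h, card_singleton, mem_quartets.1 hX] at this
  omega

lemma restrict_eq_of_subset {T t : UTree n} (h : T.splits ⊆ t.splits) {X : Finset (Fin n)}
    (hX : X ∈ quartets n) (hres : T.Resolved X) : t.restrict X = T.restrict X := by
  obtain ⟨C, hC, hC2⟩ := hres
  ext P
  simp only [mem_restrict]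
  refine ⟨fun ⟨⟨D, hD, hDP⟩, hP⟩ => ⟨?_, hP⟩, fun ⟨⟨D, hD, hDP⟩, hP⟩ => ⟨⟨D, h hD, hDP⟩, hP⟩⟩
  subst hDP
  have hX4 := mem_quartets.1 hX
  have hlt : #(D ∩ X) < 4 := lt_of_le_of_ne (hX4 ▸ card_le_card inter_subset_right)
    fun h4 => hP.2 (eq_of_subset_of_card_le inter_subset_right (by omega))
  have hpos : 0 < #(D ∩ X) := card_pos.2 (nonempty_iff_ne_empty.2 hP.1)
  interval_cases hcard : #(D ∩ X)
  · obtain ⟨x, hx⟩ := card_eq_one.1 hcard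
    refine ⟨{x}, T.singleton_mem_splits hX x, ?_⟩
    rw [hx, singleton_inter_of_mem (mem_inter.1 (hx ▸ mem_singleton_self x)).2]
  · rcases SplitCompatible.inter_eq_or_eq_sdiff (t.compat D hD C (h hC)) hX4 hcard hC2 with
        he | he
    · exact ⟨C, hC, he.symm⟩
    · exact ⟨univ \ C, T.compl_mem C hC, by rw [he]; ext; simp [and_comm]⟩
  · have hsd : #(X \ (D ∩ X)) = 1 := by
      rw [card_sdiff_of_subset inter_subset_right]
      omega
    obtain ⟨x, hx⟩ := card_eq_one.1 hsd
    refine ⟨univ \ {x}, T.compl_mem _ (T.singleton_mem_splits hX x), ?_⟩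
    rw [← hx]
    ext y
    simp only [mem_inter, mem_sdiff, mem_univ, true_and]
    tauto

lemma setD_comm (T₁ T₂ : UTree n) : setD T₁ T₂ = setD T₂ T₁ :=
  filter_congr fun _ _ => by
    rw [← and_assoc, and_comm (a := famResolvedU _ _), and_assoc, ne_comm]

lemma mem_setD_iff_of_fullRef {T₁ T₂ t₁ t₂ : UTree n} (h₁ : t₁ ∈ T₁.FullRef)
    (h₂ : t₂ ∈ T₂.FullRef) {X : Finset (Fin n)} (hX : X ∈ quartets n) (hX₁ : T₁.Resolved X)
    (hX₂ : T₂.Resolved X) : X ∈ setD t₁ t₂ ↔ X ∈ setD T₁ T₂ := by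
  have e₁ := restrict_eq_of_subset h₁.2 hX hX₁
  have e₂ := restrict_eq_of_subset h₂.2 hX hX₂
  simp only [setD, famSetDU, mem_filter]
  exact ⟨fun h => ⟨hX, hX₁, hX₂, fun h' => h.2.2.2 (e₁.trans (h'.trans e₂.symm))⟩,
    fun h => ⟨hX, h₁.1 X hX, h₂.1 X hX, fun h' => h.2.2.2 (e₁.symm.trans (h'.trans e₂))⟩⟩

lemma card_setD_le_of_fullRef {T₁ T₂ t₁ t₂ : UTree n} (h₁ : t₁ ∈ T₁.FullRef)
    (h₂ : t₂ ∈ T₂.FullRef) : #(setD t₁ t₂) ≤ #(setD T₁ T₂) + #(setR1 T₁ T₂) +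
      #(setR2 T₁ T₂) + #(setU T₁ T₂) := by
  have hsub : setD t₁ t₂ ⊆ setD T₁ T₂ ∪ setR1 T₁ T₂ ∪ setR2 T₁ T₂ ∪ setU T₁ T₂ := by
    intro X hX
    have hXq : X ∈ quartets n := (mem_filter.1 hX).1
    simp only [setR1, setR2, setU, famSetR1U, famSetR2U, famSetUU, mem_union, mem_filter]
    by_cases hX₁ : T₁.Resolved X <;> by_cases hX₂ : T₂.Resolved X
    · exact Or.inl (Or.inl (Or.inl ((mem_setD_iff_of_fullRef h₁ h₂ hXq hX₁ hX₂).1 hX)))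
    all_goals simp_all [Resolved]
  have := card_le_card hsub
  have := card_union_le (setD T₁ T₂ ∪ setR1 T₁ T₂ ∪ setR2 T₁ T₂) (setU T₁ T₂)
  have := card_union_le (setD T₁ T₂ ∪ setR1 T₁ T₂) (setR2 T₁ T₂)
  have := card_union_le (setD T₁ T₂) (setR1 T₁ T₂)
  omega

lemma inter_eq_or_eq_sdiff_of_restrict_eq {t₁ t₂ : UTree n} {X E G : Finset (Fin n)}
    (hX : X ∈ quartets n) (h : t₁.restrict X = t₂.restrict X) (hE : E ∈ t₁.splits)
    (hE2 : #(E ∩ X) = 2) (hG : G ∈ t₂.splits) (hG2 : #(G ∩ X) = 2) :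
    E ∩ X = G ∩ X ∨ E ∩ X = X \ G := by
  have hX4 := mem_quartets.1 hX
  have hEX : E ∩ X ∈ t₂.restrict X := h ▸ mem_restrict.2 ⟨⟨E, hE, rfl⟩,
    nonempty_iff_ne_empty.1 (card_pos.1 (by omega)), fun h => by rw [h] at hE2; omega⟩
  obtain ⟨⟨D, hD, hDE⟩, -⟩ := mem_restrict.1 hEX
  rw [← hDE] at hE2 ⊢
  exact SplitCompatible.inter_eq_or_eq_sdiff (t₂.compat D hD G hG) hX4 hE2 hG2

lemma exists_mem_inter_card_eq_two {x₀ : Fin n} {L : Finset (Finset (Fin n))}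
    (hL : IsHierarchy (univ.erase x₀) L) (hbin : IsBinary L) {X : Finset (Fin n)}
    (hX : X ∈ quartets n) : ∃ E ∈ L, #(E ∩ X) = 2 := by
  have := pred_card_le_card_erase (s := X) (a := x₀)
  obtain ⟨E, hE, h2⟩ := hL.exists_inter_card_eq_two hbin
    (erase_subset_erase x₀ (subset_univ X)) (by rw [mem_quartets.1 hX] at this; omega)
  exact ⟨E, hE, by rwa [inter_erase_of_notMem (hL.notMem_of_mem hE (notMem_erase x₀ univ))] at h2⟩

lemma ofHierarchy_mem_fullRef (T : UTree n) {x₀ : Fin n} {L : Finset (Finset (Fin n))}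
    (hL : IsHierarchy (univ.erase x₀) L) (hbin : IsBinary L)
    (hsub : {A ∈ T.splits | x₀ ∉ A} ⊆ L) : ofHierarchy x₀ L hL ∈ T.FullRef := by
  refine ⟨fun X hX => ?_, fun A hA => ?_⟩
  · obtain ⟨E, hE, h2⟩ := exists_mem_inter_card_eq_two hL hbin hX
    exact ⟨E, mem_union_left _ hE, h2⟩
  by_cases hA₀ : x₀ ∈ A
  · have hc : univ \ A ∈ L :=
      hsub (mem_filter.2 ⟨T.compl_mem A hA, fun h => (mem_sdiff.1 h).2 hA₀⟩)
    exact mem_union_right _ (mem_image.2 ⟨_, hc, Finset.sdiff_sdiff_eq_self (subset_univ A)⟩)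
  · exact mem_union_left _ (hsub (mem_filter.2 ⟨hA, hA₀⟩))

lemma exists_fullRef_three_mul_le (T₁ T₂ : UTree n) :
    ∃ t₁ ∈ T₁.FullRef, ∀ t₂ ∈ T₂.FullRef,
      3 * #(setD T₁ T₂) + 2 * #(setR2 T₁ T₂) ≤ 3 * #(setD t₁ t₂) := by
  rcases lt_or_ge n 4 with hn | hn
  · have hq : quartets n = ∅ := powersetCard_eq_empty.2 (by simpa using hn)
    refine ⟨T₁, ⟨fun X hX => by simp [hq] at hX, Subset.rfl⟩, fun t₂ _ => ?_⟩
    simp [setD, setR2, famSetDU, famSetR2U, hq]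
  set x₀ : Fin n := ⟨0, by omega⟩
  have hR : ∀ X ∈ setR2 T₁ T₂, X ∈ quartets n ∧ T₂.Resolved X ∧ ¬T₁.Resolved X :=
    fun X hX => mem_filter.1 hX
  choose! g hg hg2 using fun X hX => (hR X hX).2.1
  obtain ⟨L, hL, hbin, hsub, hcount⟩ :=
    (T₁.isHierarchy_rootAt (x₀ := x₀) (by omega)).exists_binary_refinement (setR2 T₁ T₂)
      (fun X => X.erase x₀) (fun X => g X ∩ X.erase x₀) fun X hX =>
        ⟨card_erase_le.trans (mem_quartets.1 (hR X hX).1).le, fun C hC h2 =>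
          (hR X hX).2.2 ⟨C, (mem_filter.1 hC).1, by
            rwa [inter_erase_of_notMem (mem_filter.1 hC).2] at h2⟩⟩
  have ht₁ := T₁.ofHierarchy_mem_fullRef hL hbin hsub
  refine ⟨ofHierarchy x₀ L hL, ht₁, fun t₂ ht₂ => ?_⟩
  refine three_mul_card_add_le _ (fun X hX => ?_) (fun X hX => ?_) ?_ hcount
  · have hX' := mem_filter.1 hX
    exact (mem_setD_iff_of_fullRef ht₁ ht₂ hX'.1 hX'.2.1 hX'.2.2.1).2 hX
  · obtain ⟨hXR, hgood⟩ := mem_filter.1 hX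
    obtain ⟨hXq, hX₂, -⟩ := hR X hXR
    obtain ⟨E, hE, hE2⟩ := exists_mem_inter_card_eq_two hL hbin hXq
    have hx₀E := hL.notMem_of_mem hE (notMem_erase x₀ univ)
    refine mem_filter.2 ⟨hXq, ⟨E, mem_union_left _ hE, hE2⟩, hX₂.mono ht₂.2, fun heq => hgood
      ⟨E, hE, by rwa [inter_erase_of_notMem hx₀E], sameSplit_erase hx₀E ?_⟩⟩
    exact inter_eq_or_eq_sdiff_of_restrict_eq hXq heq (mem_union_left _ hE) hE2
      (ht₂.2 (hg X hXR)) (hg2 X hXR)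
  · exact disjoint_filter.2 fun X _ hD hR2 => hR2.2 hD.1

lemma fullRef_nonempty (T : UTree n) : T.FullRef.Nonempty :=
  let ⟨t, ht, _⟩ := exists_fullRef_three_mul_le T T
  ⟨t, ht⟩

lemma dHaus_le (T₁ T₂ : UTree n) :
    dHaus T₁ T₂ ≤ (#(setD T₁ T₂) : ℝ) + #(setR1 T₁ T₂) + #(setR2 T₁ T₂) +
      #(setU T₁ T₂) := by
  have := T₁.fullRef_nonempty.to_subtype
  have := T₂.fullRef_nonempty.to_subtype
  refine max_iSup_iInf_le _ fun t₁ t₂ => ?_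
  rw [quartetDist]
  exact_mod_cast card_setD_le_of_fullRef t₁.2 t₂.2

lemma le_dHaus (T₁ T₂ : UTree n) :
    max (#(setD T₁ T₂) + 2 / 3 * (#(setR2 T₁ T₂) : ℝ))
      (#(setD T₁ T₂) + 2 / 3 * (#(setR1 T₁ T₂) : ℝ)) ≤ dHaus T₁ T₂ := by
  have := T₁.fullRef_nonempty.to_subtype
  have := T₂.fullRef_nonempty.to_subtype
  obtain ⟨t₁, ht₁, h₁⟩ := exists_fullRef_three_mul_le T₁ T₂
  obtain ⟨t₂, ht₂, h₂⟩ := exists_fullRef_three_mul_le T₂ T₁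
  refine le_max_iSup_iInf _ ⟨⟨t₁, ht₁⟩, fun s₂ => ?_⟩ ⟨⟨t₂, ht₂⟩, fun s₁ => ?_⟩
  · have : (3 * #(setD T₁ T₂) + 2 * #(setR2 T₁ T₂) : ℝ) ≤ 3 * #(setD t₁ s₂.1) := by
      exact_mod_cast h₁ s₂.1 s₂.2
    rw [quartetDist]
    linarith
  · have : (3 * #(setD T₁ T₂) + 2 * #(setR1 T₁ T₂) : ℝ) ≤ 3 * #(setD s₁.1 t₂) := by
      rw [setD_comm T₁, setD_comm s₁.1]
      exact_mod_cast h₂ s₁.1 s₁.2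
    rw [quartetDist]
    linarith

end UTree

/-- **Theorem.**  Let `β > 0`.  For every `p ∈ (0,1]`, the Hausdorff triplet
(resp. quartet) distance and the parametric distance `d⁽ᵖ⁾` are equivalent when
restricted to pairs `(T₁,T₂)` with
`|U(T₁,T₂)| ≤ β·(|D(T₁,T₂)| + |R₁(T₁,T₂)| + |R₂(T₁,T₂)|)`: there are constants
`c₁, c₂ > 0`, depending only on `p` and `β`, with
`c₁·d⁽ᵖ⁾(T₁,T₂) ≤ d_Haus(T₁,T₂) ≤ c₂·d⁽ᵖ⁾(T₁,T₂)` for all such pairs. -/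
theorem hausdorff_equivalent_parametric (β : ℝ) (hβ : 0 < β)
    (p : ℝ) (hp0 : 0 < p) (hp1 : p ≤ 1) :
    ∃ c₁ c₂ : ℝ, 0 < c₁ ∧ 0 < c₂ ∧
      (∀ (n : ℕ) (T₁ T₂ : RTree n),
        ((RTree.setU T₁ T₂).card : ℝ) ≤
            β * (((RTree.setD T₁ T₂).card : ℝ) + ((RTree.setR1 T₁ T₂).card : ℝ) +
              ((RTree.setR2 T₁ T₂).card : ℝ)) →
          c₁ * RTree.pdist p T₁ T₂ ≤ RTree.dHaus T₁ T₂ ∧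
            RTree.dHaus T₁ T₂ ≤ c₂ * RTree.pdist p T₁ T₂) ∧
      ∀ (n : ℕ) (T₁ T₂ : UTree n),
        ((UTree.setU T₁ T₂).card : ℝ) ≤
            β * (((UTree.setD T₁ T₂).card : ℝ) + ((UTree.setR1 T₁ T₂).card : ℝ) +
              ((UTree.setR2 T₁ T₂).card : ℝ)) →
          c₁ * UTree.pdist p T₁ T₂ ≤ UTree.dHaus T₁ T₂ ∧
            UTree.dHaus T₁ T₂ ≤ c₂ * UTree.pdist p T₁ T₂ := by
  refine ⟨1 / 3, (1 + β) / p, by norm_num, by positivity, fun n T₁ T₂ hU => ?_,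
    fun n T₁ T₂ hU => ?_⟩
  · exact parametric_bounds (Nat.cast_nonneg _) (Nat.cast_nonneg _) (Nat.cast_nonneg _) hβ hp0
      hp1 hU (RTree.le_dHaus T₁ T₂) (RTree.dHaus_le T₁ T₂)
  · exact parametric_bounds (Nat.cast_nonneg _) (Nat.cast_nonneg _) (Nat.cast_nonneg _) hβ hp0
      hp1 hU (UTree.le_dHaus T₁ T₂) (UTree.dHaus_le T₁ T₂)
end

section
/- In the rooted case, there exists an index q ∈ [d] such that |A_q| ≥ 2|F_q|; in the unrooted case, there exist two distinct indices q, r ∈ [d] such that |A_{qr}| ≥ 2|F_{qr}|. -/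
open Finset

attribute [local instance] Classical.propDecidable

namespace RTree

variable {n : ℕ}

/-- The children of the node of `T` corresponding to the cluster `C`: the maximal
clusters of `T` properly contained in `C`. -/
noncomputable def childSet (T : RTree n) (C : Finset (Fin n)) : Finset (Finset (Fin n)) :=
  T.clusters.filter fun A => A ⊂ C ∧ ¬ ∃ B ∈ T.clusters, A ⊂ B ∧ B ⊂ C

/-- The cluster family of `Pull-Out(T, u)`, where `u` is the child of the node `v`
corresponding to the cluster `A ⊂ C`:  the node `v` is split in two, creating the
new cluster `C \ A` gathering the remaining children of `v`. -/
noncomputable def pullOutFam (T : RTree n) (C A : Finset (Fin n)) : Finset (Finset (Fin n)) :=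
  insert (C \ A) T.clusters

end RTree

/-- The triplets that are not resolved in the tree with cluster family `F` but are
resolved in the tree with cluster family `F'` (the set `L_q` for `F' = Pull-Out`). -/
noncomputable def famL {n : ℕ} (F F' : Finset (Finset (Fin n))) : Finset (Finset (Fin n)) :=
  (triplets n).filter fun X => ¬ famResolved F X ∧ famResolved F' X

/-- The number `f_q` of votes cast by the profile `P` *for* the way the triplets of
`famL F F'` are resolved in `F'`. -/
noncomputable def famAgree {n k : ℕ} (P : Fin k → RTree n)
    (F F' : Finset (Finset (Fin n))) : ℕ :=
  ∑ X ∈ famL F F',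
    (Finset.univ.filter fun i : Fin k =>
      famRestrict (P i).clusters X = famRestrict F' X).card

/-- The number `a_q` of votes cast by the profile `P` *against* the way the triplets
of `famL F F'` are resolved in `F'`. -/
noncomputable def famDisagree {n k : ℕ} (P : Fin k → RTree n)
    (F F' : Finset (Finset (Fin n))) : ℕ :=
  ∑ X ∈ famL F F',
    (Finset.univ.filter fun i : Fin k =>
      famRestrict (P i).clusters X ≠ famRestrict F' X).card

namespace UTree

variable {n : ℕ}

/-- `part` is the partition of the taxa into the leaf sets of the subtrees hanging
off an internal node `v` of `T`: its blocks are split sides, they partition the taxon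
set, there are at least three of them (`v` is internal), and every split of `T` has,
on one of its two sides, leaves from only one block (its edge lies in one of the
subtrees around `v`). -/
def IsNodePartition (T : UTree n) (part : Finset (Finset (Fin n))) : Prop :=
  3 ≤ part.card ∧ (∀ B ∈ part, B ∈ T.splits) ∧
    (∀ B₁ ∈ part, ∀ B₂ ∈ part, B₁ ≠ B₂ → B₁ ∩ B₂ = ∅) ∧
    (∀ x : Fin n, ∃ B ∈ part, x ∈ B) ∧
    ∀ A ∈ T.splits, (∃ B ∈ part, A ⊆ B) ∨ (∃ B ∈ part, Finset.univ \ A ⊆ B)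

/-- The split system of `Pull-2-Out(T, u₁, u₂)`, where `u₁`, `u₂` are the neighbors
of the node `v` whose subtrees have leaf sets `B₁` and `B₂`:  the node `v` is split
in two, creating the new split `B₁ ∪ B₂` versus the rest. -/
noncomputable def pull2Fam (T : UTree n) (B₁ B₂ : Finset (Fin n)) :
    Finset (Finset (Fin n)) :=
  insert (B₁ ∪ B₂) (insert (Finset.univ \ (B₁ ∪ B₂)) T.splits)

end UTree

/-- The quartets that are not resolved in the tree with split system `F` but are
resolved in the tree with split system `F'` (the set `L_{qr}` for `F' = Pull-2-Out`). -/
noncomputable def famLU {n : ℕ} (F F' : Finset (Finset (Fin n))) : Finset (Finset (Fin n)) :=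
  (quartets n).filter fun X => ¬ famResolvedU F X ∧ famResolvedU F' X

/-- The number `f_{qr}` of votes cast by the profile `P` *for* the way the quartets
of `famLU F F'` are resolved in `F'`. -/
noncomputable def famAgreeU {n k : ℕ} (P : Fin k → UTree n)
    (F F' : Finset (Finset (Fin n))) : ℕ :=
  ∑ X ∈ famLU F F',
    (Finset.univ.filter fun i : Fin k =>
      famRestrictU (P i).splits X = famRestrictU F' X).card

/-- The number `a_{qr}` of votes cast by the profile `P` *against* the way the
quartets of `famLU F F'` are resolved in `F'`. -/
noncomputable def famDisagreeU {n k : ℕ} (P : Fin k → UTree n)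
    (F F' : Finset (Finset (Fin n))) : ℕ :=
  ∑ X ∈ famLU F F',
    (Finset.univ.filter fun i : Fin k =>
      famRestrictU (P i).splits X ≠ famRestrictU F' X).card

/-- The set `M_q(v)` of triplets `X ∈ R₂(T₁,T₂)` such that the least common ancestor
of `X` in `T₁` is the node `v` (with cluster `C`, i.e. `C` is the smallest cluster
of `T₁` containing `X`), `T₁|X` is unresolved, but the restriction of
`Pull-Out(T₁, A)` to `X` is fully resolved (where `A` is a child of `C`). -/
noncomputable def famM {n : ℕ} (T₁ T₂ : RTree n) (C A : Finset (Fin n)) :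
    Finset (Finset (Fin n)) :=
  (triplets n).filter fun X =>
    X ⊆ C ∧ (∀ C' ∈ T₁.clusters, X ⊆ C' → C ⊆ C') ∧
      famResolved T₂.clusters X ∧ ¬ famResolved T₁.clusters X ∧
      famResolved (T₁.pullOutFam C A) X

/-- The set `F_q`: triplets of `M_q(v)` on which `T₂` agrees with `Pull-Out(T₁, A)`. -/
noncomputable def famF {n : ℕ} (T₁ T₂ : RTree n) (C A : Finset (Fin n)) :
    Finset (Finset (Fin n)) :=
  (famM T₁ T₂ C A).filter fun X =>
    famRestrict T₂.clusters X = famRestrict (T₁.pullOutFam C A) X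

/-- The set `A_q`: triplets of `M_q(v)` on which `T₂` disagrees with
`Pull-Out(T₁, A)`. -/
noncomputable def famA {n : ℕ} (T₁ T₂ : RTree n) (C A : Finset (Fin n)) :
    Finset (Finset (Fin n)) :=
  (famM T₁ T₂ C A).filter fun X =>
    famRestrict T₂.clusters X ≠ famRestrict (T₁.pullOutFam C A) X

/-- The set `M_{qr}(v)` of quartets `X ∈ R₂(T₁,T₂)` such that `T₁|X` is a fan whose
pairwise leaf paths meet at the node `v` (with node partition `part`, i.e. the four
leaves of `X` lie in four distinct blocks of `part`), `T₁|X` is unresolved, but the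
restriction of `Pull-2-Out(T₁, B₁, B₂)` to `X` is fully resolved. -/
noncomputable def famMU {n : ℕ} (T₁ T₂ : UTree n)
    (part : Finset (Finset (Fin n))) (B₁ B₂ : Finset (Fin n)) :
    Finset (Finset (Fin n)) :=
  (quartets n).filter fun X =>
    (∀ B ∈ part, (B ∩ X).card ≤ 1) ∧
      famResolvedU T₂.splits X ∧ ¬ famResolvedU T₁.splits X ∧
      famResolvedU (T₁.pull2Fam B₁ B₂) X

/-- The set `F_{qr}`: quartets of `M_{qr}(v)` on which `T₂` agrees with
`Pull-2-Out(T₁, B₁, B₂)`. -/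
noncomputable def famFU {n : ℕ} (T₁ T₂ : UTree n)
    (part : Finset (Finset (Fin n))) (B₁ B₂ : Finset (Fin n)) :
    Finset (Finset (Fin n)) :=
  (famMU T₁ T₂ part B₁ B₂).filter fun X =>
    famRestrictU T₂.splits X = famRestrictU (T₁.pull2Fam B₁ B₂) X

/-- The set `A_{qr}`: quartets of `M_{qr}(v)` on which `T₂` disagrees with
`Pull-2-Out(T₁, B₁, B₂)`. -/
noncomputable def famAU {n : ℕ} (T₁ T₂ : UTree n)
    (part : Finset (Finset (Fin n))) (B₁ B₂ : Finset (Fin n)) :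
    Finset (Finset (Fin n)) :=
  (famMU T₁ T₂ part B₁ B₂).filter fun X =>
    famRestrictU T₂.splits X ≠ famRestrictU (T₁.pull2Fam B₁ B₂) X

/-!
Double counting over the resolutions of `v`. Suppose a triplet `X` lies in `F_q` for some `q`.
Its lowest common ancestor is `v` and `T₁|X` is a fan, so its three leaves lie below three
distinct children of `v`, and pulling out any one of these children resolves `X`: thus
`X ∈ M_q` for exactly three indices `q`. The three resulting resolutions of `X` are pairwise
different, so `T₂|X` agrees with at most one of them. Hence every triplet is counted in the
sets `A_q` at least twice as often as in the sets `F_q`, and summing over all triplets yields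
some `q` with `|A_q| ≥ 2|F_q|`.

In the unrooted case the four leaves of a quartet lie in four distinct subtrees around `v`,
so `X ∈ M_{qr}` for the `12` ordered pairs of these subtrees; `T₂|X` agrees with
`Pull-2-Out(T₁, u_q, u_r)|X` only if `{q, r}` separates `X` as `T₂` does, which happens for
at most `4` of them.
-/

section Counting

variable {ι α : Type*} [DecidableEq α]

theorem card_filter_inter_nonempty {P : Finset (Finset α)} {S : Finset α}
    (hdisj : ∀ B ∈ P, ∀ B' ∈ P, B ≠ B' → Disjoint B B')
    (hcov : ∀ x ∈ S, ∃ B ∈ P, x ∈ B) (hle : ∀ B ∈ P, #(B ∩ S) ≤ 1) :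
    #{B ∈ P | (B ∩ S).Nonempty} = #S := by
  set Q : Finset (Finset α) := {B ∈ P | (B ∩ S).Nonempty}
  have hS : Q.biUnion (· ∩ S) = S := by
    refine (biUnion_subset.2 fun B _ => inter_subset_right).antisymm fun x hx => ?_
    obtain ⟨B, hB, hxB⟩ := hcov x hx
    exact mem_biUnion.2 ⟨B, mem_filter.2 ⟨hB, x, mem_inter.2 ⟨hxB, hx⟩⟩, mem_inter.2 ⟨hxB, hx⟩⟩
  have hpw : (Q : Set (Finset α)).PairwiseDisjoint (· ∩ S) := fun B hB B' hB' hne =>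
    (hdisj B (mem_filter.1 hB).1 B' (mem_filter.1 hB').1 hne).mono
      inter_subset_left inter_subset_left
  rw [← hS, card_biUnion hpw, card_eq_sum_ones]
  refine sum_congr rfl fun B hB => ?_
  have := (mem_filter.1 hB).2.card_pos
  have := hle B (mem_filter.1 hB).1
  omega

theorem sum_card_eq_sum_card_filter_mem [Fintype α] (s : Finset ι) (F : ι → Finset α) :
    ∑ i ∈ s, #(F i) = ∑ x, #{i ∈ s | x ∈ F i} := by
  simpa [bipartiteAbove, bipartiteBelow] using
    sum_card_bipartiteAbove_eq_sum_card_bipartiteBelow (fun i x => x ∈ F i) (s := s) (t := univ)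

theorem exists_two_mul_card_le_card_sdiff [Fintype α] {s : Finset ι} (hs : s.Nonempty)
    {M F : ι → Finset α} (hFM : ∀ i ∈ s, F i ⊆ M i)
    (h : ∀ x, 3 * #{i ∈ s | x ∈ F i} ≤ #{i ∈ s | x ∈ M i}) :
    ∃ i ∈ s, 2 * #(F i) ≤ #(M i \ F i) := by
  have hsum : ∑ i ∈ s, 3 * #(F i) ≤ ∑ i ∈ s, #(M i) := by
    rw [← mul_sum, sum_card_eq_sum_card_filter_mem s F, sum_card_eq_sum_card_filter_mem s M,
      mul_sum]
    exact sum_le_sum fun x _ => h x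
  obtain ⟨i, hi, hle⟩ := exists_le_of_sum_le hs hsum
  refine ⟨i, hi, ?_⟩
  rw [card_sdiff_of_subset (hFM i hi)]
  omega

theorem univ_sdiff_inter [Fintype α] (P X : Finset α) :
    (univ \ P) ∩ X = X \ P := by
  ext; simp [and_comm]

theorem card_union_inter_eq_two_iff {B₁ B₂ X : Finset α}
    (hB : Disjoint B₁ B₂) (h₁ : #(B₁ ∩ X) ≤ 1) (h₂ : #(B₂ ∩ X) ≤ 1) :
    #((B₁ ∪ B₂) ∩ X) = 2 ↔ (B₁ ∩ X).Nonempty ∧ (B₂ ∩ X).Nonempty := by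
  rw [union_inter_distrib_right, card_union_of_disjoint (hB.mono inter_subset_left
    inter_subset_left), ← card_pos, ← card_pos]
  omega

end Counting

section Rooted

variable {n : ℕ}

theorem famResolved_insert {F : Finset (Finset (Fin n))} {E X : Finset (Fin n)} :
    famResolved (insert E F) X ↔ #(E ∩ X) = 2 ∨ famResolved F X := by
  simp [famResolved]

theorem card_inter_le_one_of_not_famResolved {F : Finset (Finset (Fin n))}
    {A X : Finset (Fin n)} (hX : #X = 3) (hres : ¬ famResolved F X) (hA : A ∈ F)
    (hXA : ¬ X ⊆ A) : #(A ∩ X) ≤ 1 := by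
  have hlt : #(A ∩ X) < #X := card_lt_card <|
    inter_subset_right.ssubset_of_ne fun h => hXA (h ▸ inter_subset_left)
  have hne : #(A ∩ X) ≠ 2 := fun h => hres ⟨A, hA, h⟩
  omega

namespace RTree

theorem mem_childSet {T : RTree n} {C A : Finset (Fin n)} :
    A ∈ T.childSet C ↔ A ∈ T.clusters ∧ A ⊂ C ∧ ¬ ∃ B ∈ T.clusters, A ⊂ B ∧ B ⊂ C :=
  mem_filter

theorem disjoint_of_mem_childSet {T : RTree n} {C A A' : Finset (Fin n)}
    (hA : A ∈ T.childSet C) (hA' : A' ∈ T.childSet C) (hne : A ≠ A') : Disjoint A A' := by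
  obtain ⟨hAT, hAC, hAmax⟩ := mem_childSet.1 hA
  obtain ⟨hA'T, hA'C, hA'max⟩ := mem_childSet.1 hA'
  rcases T.laminar A hAT A' hA'T with h | h | h
  · exact absurd ⟨A', hA'T, h.ssubset_of_ne hne, hA'C⟩ hAmax
  · exact absurd ⟨A, hAT, h.ssubset_of_ne hne.symm, hAC⟩ hA'max
  · exact disjoint_iff_inter_eq_empty.2 h

theorem exists_mem_childSet_of_mem (T : RTree n) {C : Finset (Fin n)} {x : Fin n}
    (hx : x ∈ C) (hC : {x} ≠ C) : ∃ A ∈ T.childSet C, x ∈ A := by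
  have hsingle : {x} ∈ T.clusters.filter (· ⊂ C) :=
    mem_filter.2 ⟨T.singleton_mem x, (singleton_subset_iff.2 hx).ssubset_of_ne hC⟩
  obtain ⟨A, hxA, hAmem, hAmax⟩ := exists_le_maximal _ hsingle
  refine ⟨A, mem_childSet.2 ⟨(mem_filter.1 hAmem).1, (mem_filter.1 hAmem).2, ?_⟩,
    singleton_subset_iff.1 hxA⟩
  rintro ⟨B, hB, hAB, hBC⟩
  exact hAB.not_subset (hAmax (mem_filter.2 ⟨hB, hBC⟩) hAB.subset)

theorem eq_inter_of_mem_famRestrict_pullOutFam {T : RTree n} {C A D X : Finset (Fin n)}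
    (hres : ¬ famResolved T.clusters X) (hD : D ∈ famRestrict (T.pullOutFam C A) X)
    (hD2 : #D = 2) : D = (C \ A) ∩ X := by
  simp only [famRestrict, pullOutFam, mem_filter, mem_image, mem_insert] at hD
  obtain ⟨⟨E, rfl | hE, rfl⟩, -⟩ := hD
  · rfl
  · exact absurd ⟨E, hE, hD2⟩ hres

section LeastCommonAncestor

variable {T : RTree n} {A C X : Finset (Fin n)}

theorem card_inter_le_one_of_mem_childSet (hX : #X = 3)
    (hlca : ∀ C' ∈ T.clusters, X ⊆ C' → C ⊆ C') (hres : ¬ famResolved T.clusters X)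
    (hA : A ∈ T.childSet C) : #(A ∩ X) ≤ 1 :=
  card_inter_le_one_of_not_famResolved hX hres (mem_childSet.1 hA).1 fun hXA =>
    (mem_childSet.1 hA).2.1.not_subset (hlca A (mem_childSet.1 hA).1 hXA)

theorem famResolved_pullOutFam_iff (hX : #X = 3) (hXC : X ⊆ C)
    (hlca : ∀ C' ∈ T.clusters, X ⊆ C' → C ⊆ C') (hres : ¬ famResolved T.clusters X)
    (hA : A ∈ T.childSet C) : famResolved (T.pullOutFam C A) X ↔ (A ∩ X).Nonempty := by
  have hCX : (C \ A) ∩ X = X \ A := by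
    rw [sdiff_inter_right_comm, inter_eq_right.2 hXC]
  have hle := card_inter_le_one_of_mem_childSet hX hlca hres hA
  rw [pullOutFam, famResolved_insert, or_iff_left hres, hCX, card_sdiff, hX,
    ← card_pos]
  omega

end LeastCommonAncestor

end RTree

end Rooted

section RootedCount

variable {n : ℕ} {T₁ T₂ : RTree n} {A C X : Finset (Fin n)}

theorem mem_famM :
    X ∈ famM T₁ T₂ C A ↔ #X = 3 ∧ X ⊆ C ∧ (∀ C' ∈ T₁.clusters, X ⊆ C' → C ⊆ C') ∧
      famResolved T₂.clusters X ∧ ¬ famResolved T₁.clusters X ∧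
      famResolved (T₁.pullOutFam C A) X := by
  rw [famM, mem_filter, triplets, mem_powersetCard_univ]

theorem famF_subset_famM : famF T₁ T₂ C A ⊆ famM T₁ T₂ C A :=
  filter_subset _ _

theorem famA_eq_sdiff : famA T₁ T₂ C A = famM T₁ T₂ C A \ famF T₁ T₂ C A :=
  filter_not _ _

theorem eq_of_mem_famF_of_mem_famF {B : Finset (Fin n)} (hA : A ∈ T₁.childSet C)
    (hB : B ∈ T₁.childSet C) (hXA : X ∈ famF T₁ T₂ C A) (hXB : X ∈ famF T₁ T₂ C B) :
    A = B := by
  obtain ⟨hXAM, hagreeA⟩ := mem_filter.1 hXA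
  obtain ⟨hX, hXC, hlca, -, hres, hpullA⟩ := mem_famM.1 hXAM
  have hpair : #((C \ A) ∩ X) = 2 := (famResolved_insert.1 hpullA).resolve_right hres
  have hmem : (C \ A) ∩ X ∈ famRestrict (T₁.pullOutFam C B) X := by
    rw [← (mem_filter.1 hXB).2, hagreeA, famRestrict]
    exact mem_filter.2 ⟨mem_image_of_mem _ (mem_insert_self _ _),
      nonempty_iff_ne_empty.1 (card_pos.1 (by omega))⟩
  have heq := RTree.eq_inter_of_mem_famRestrict_pullOutFam hres hmem hpair
  obtain ⟨x, hx⟩ := (RTree.famResolved_pullOutFam_iff hX hXC hlca hres hA).1 hpullA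
  obtain ⟨hxA, hxX⟩ := mem_inter.1 hx
  have hxB : x ∈ B := by
    by_contra hxB
    have hxCB : x ∈ (C \ B) ∩ X := mem_inter.2 ⟨mem_sdiff.2 ⟨hXC hxX, hxB⟩, hxX⟩
    rw [← heq] at hxCB
    exact (mem_sdiff.1 (mem_inter.1 hxCB).1).2 hxA
  by_contra hne
  exact disjoint_left.1 (RTree.disjoint_of_mem_childSet hA hB hne) hxA hxB

theorem three_mul_card_filter_mem_famF_le (T₁ T₂ : RTree n) (C X : Finset (Fin n)) :
    3 * #{A ∈ T₁.childSet C | X ∈ famF T₁ T₂ C A} ≤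
      #{A ∈ T₁.childSet C | X ∈ famM T₁ T₂ C A} := by
  obtain hF | ⟨A₀, hA₀⟩ := ({A ∈ T₁.childSet C | X ∈ famF T₁ T₂ C A}).eq_empty_or_nonempty
  · simp [hF]
  obtain ⟨hX, hXC, hlca, hres₂, hres, -⟩ :=
    mem_famM.1 (famF_subset_famM (mem_filter.1 hA₀).2)
  have hF : #{A ∈ T₁.childSet C | X ∈ famF T₁ T₂ C A} ≤ 1 :=
    card_le_one.2 fun A hA B hB => eq_of_mem_famF_of_mem_famF (mem_filter.1 hA).1
      (mem_filter.1 hB).1 (mem_filter.1 hA).2 (mem_filter.1 hB).2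
  have hM : {A ∈ T₁.childSet C | X ∈ famM T₁ T₂ C A} =
      {A ∈ T₁.childSet C | (A ∩ X).Nonempty} := by
    refine filter_congr fun A hA => ?_
    rw [mem_famM, ← RTree.famResolved_pullOutFam_iff hX hXC hlca hres hA]
    tauto
  have hcov : ∀ x ∈ X, ∃ A ∈ T₁.childSet C, x ∈ A := fun x hx =>
    T₁.exists_mem_childSet_of_mem (hXC hx) fun h => by
      have := card_le_card (hXC.trans h.ge)
      rw [card_singleton] at this
      omega
  have hM3 : #{A ∈ T₁.childSet C | (A ∩ X).Nonempty} = 3 :=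
    hX ▸ card_filter_inter_nonempty
      (fun _ hA _ hB => RTree.disjoint_of_mem_childSet hA hB) hcov
      (fun A hA => RTree.card_inter_le_one_of_mem_childSet hX hlca hres hA)
  rw [hM, hM3]
  omega

theorem RTree.exists_two_mul_card_famF_le (T₁ T₂ : RTree n) {C : Finset (Fin n)}
    (hC : (T₁.childSet C).Nonempty) :
    ∃ A ∈ T₁.childSet C, 2 * #(famF T₁ T₂ C A) ≤ #(famA T₁ T₂ C A) := by
  simpa only [famA_eq_sdiff] using exists_two_mul_card_le_card_sdiff hC
    (fun A _ => famF_subset_famM) (three_mul_card_filter_mem_famF_le T₁ T₂ C)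

end RootedCount

section Unrooted

variable {n : ℕ}

theorem famResolvedU_insert {F : Finset (Finset (Fin n))} {E X : Finset (Fin n)} :
    famResolvedU (insert E F) X ↔ #(E ∩ X) = 2 ∨ famResolvedU F X := by
  simp [famResolvedU]

namespace UTree

variable {T : UTree n} {B₁ B₂ D X : Finset (Fin n)}

theorem famResolvedU_pull2Fam_iff (hX : #X = 4) (hres : ¬ famResolvedU T.splits X) :
    famResolvedU (T.pull2Fam B₁ B₂) X ↔ #((B₁ ∪ B₂) ∩ X) = 2 := by
  have hcompl := card_sdiff (s := B₁ ∪ B₂) (t := X)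
  rw [pull2Fam, famResolvedU_insert, famResolvedU_insert, univ_sdiff_inter]
  simp only [hres, or_false]
  omega

theorem eq_or_eq_of_mem_famRestrictU_pull2Fam (hres : ¬ famResolvedU T.splits X)
    (hD : D ∈ famRestrictU (T.pull2Fam B₁ B₂) X) (hD2 : #D = 2) :
    D = (B₁ ∪ B₂) ∩ X ∨ D = X \ (B₁ ∪ B₂) := by
  simp only [famRestrictU, pull2Fam, mem_filter, mem_image, mem_insert] at hD
  obtain ⟨⟨E, rfl | rfl | hE, rfl⟩, -⟩ := hD
  · exact Or.inl rfl
  · exact Or.inr (univ_sdiff_inter _ _)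
  · exact absurd ⟨E, hE, hD2⟩ hres

theorem IsNodePartition.disjoint {part : Finset (Finset (Fin n))} (hpart : T.IsNodePartition part)
    {B B' : Finset (Fin n)} (hB : B ∈ part) (hB' : B' ∈ part) (hne : B ≠ B') : Disjoint B B' :=
  disjoint_iff_inter_eq_empty.2 (hpart.2.2.1 B hB B' hB' hne)

theorem IsNodePartition.exists_mem {part : Finset (Finset (Fin n))}
    (hpart : T.IsNodePartition part) (x : Fin n) : ∃ B ∈ part, x ∈ B :=
  hpart.2.2.2.1 x

end UTree

end Unrooted

section UnrootedCount

variable {n : ℕ} {T₁ T₂ : UTree n} {part : Finset (Finset (Fin n))} {B₁ B₂ X : Finset (Fin n)}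

theorem mem_famMU :
    X ∈ famMU T₁ T₂ part B₁ B₂ ↔ #X = 4 ∧ (∀ B ∈ part, #(B ∩ X) ≤ 1) ∧
      famResolvedU T₂.splits X ∧ ¬ famResolvedU T₁.splits X ∧
      famResolvedU (T₁.pull2Fam B₁ B₂) X := by
  rw [famMU, mem_filter, quartets, mem_powersetCard_univ]

theorem famFU_subset_famMU : famFU T₁ T₂ part B₁ B₂ ⊆ famMU T₁ T₂ part B₁ B₂ :=
  filter_subset _ _

theorem famAU_eq_sdiff :
    famAU T₁ T₂ part B₁ B₂ = famMU T₁ T₂ part B₁ B₂ \ famFU T₁ T₂ part B₁ B₂ :=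
  filter_not _ _

namespace UTree.IsNodePartition

theorem card_filter_inter_nonempty (hpart : T₁.IsNodePartition part)
    (hblk : ∀ B ∈ part, #(B ∩ X) ≤ 1) {S : Finset (Fin n)} (hS : S ⊆ X) :
    #{B ∈ part | (B ∩ S).Nonempty} = #S :=
  _root_.card_filter_inter_nonempty (fun _ hB _ hB' => hpart.disjoint hB hB')
    (fun x _ => hpart.exists_mem x)
    (fun B hB => (card_le_card (inter_subset_inter_left hS)).trans (hblk B hB))

theorem famResolvedU_pull2Fam_iff (hpart : T₁.IsNodePartition part) (hX : #X = 4)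
    (hblk : ∀ B ∈ part, #(B ∩ X) ≤ 1) (hres : ¬ famResolvedU T₁.splits X)
    {p : Finset (Fin n) × Finset (Fin n)} (hp : p ∈ part.offDiag) :
    famResolvedU (T₁.pull2Fam p.1 p.2) X ↔
      p ∈ ({B ∈ part | (B ∩ X).Nonempty} : Finset _).offDiag := by
  obtain ⟨hp₁, hp₂, hne⟩ := mem_offDiag.1 hp
  rw [UTree.famResolvedU_pull2Fam_iff hX hres,
    card_union_inter_eq_two_iff (hpart.disjoint hp₁ hp₂ hne) (hblk _ hp₁) (hblk _ hp₂)]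
  simp only [mem_offDiag, mem_filter]
  tauto

theorem filter_mem_famFU_subset (hpart : T₁.IsNodePartition part)
    {p₀ : Finset (Fin n) × Finset (Fin n)} (hp₀ : X ∈ famFU T₁ T₂ part p₀.1 p₀.2) :
    {p ∈ part.offDiag | X ∈ famFU T₁ T₂ part p.1 p.2} ⊆
      ({B ∈ part | (B ∩ ((p₀.1 ∪ p₀.2) ∩ X)).Nonempty} : Finset _).offDiag ∪
        ({B ∈ part | (B ∩ (X \ (p₀.1 ∪ p₀.2))).Nonempty} : Finset _).offDiag := by
  obtain ⟨hX, hblk, -, hres, -⟩ := mem_famMU.1 (famFU_subset_famMU hp₀)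
  intro p hp
  obtain ⟨hpoff, hXp⟩ := mem_filter.1 hp
  obtain ⟨hXpM, hagree⟩ := mem_filter.1 hXp
  have hpull := (mem_famMU.1 hXpM).2.2.2.2
  have hpair := (UTree.famResolvedU_pull2Fam_iff hX hres).1 hpull
  have hmem : (p.1 ∪ p.2) ∩ X ∈ famRestrictU (T₁.pull2Fam p₀.1 p₀.2) X := by
    rw [← (mem_filter.1 hp₀).2, hagree, famRestrictU]
    refine mem_filter.2 ⟨mem_image_of_mem _ (mem_insert_self _ _), fun h => ?_, fun h => ?_⟩
    · rw [h, card_empty] at hpair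
      omega
    · rw [h, hX] at hpair
      omega
  have hpS : ∀ S, (p.1 ∪ p.2) ∩ X = S →
      p ∈ ({B ∈ part | (B ∩ S).Nonempty} : Finset _).offDiag := by
    rintro S rfl
    obtain ⟨hp₁, hp₂, hne⟩ :=
      mem_offDiag.1 ((famResolvedU_pull2Fam_iff hpart hX hblk hres hpoff).1 hpull)
    refine mem_offDiag.2 ⟨mem_filter.2 ⟨(mem_filter.1 hp₁).1, ?_⟩,
      mem_filter.2 ⟨(mem_filter.1 hp₂).1, ?_⟩, hne⟩
    · exact (mem_filter.1 hp₁).2.mono fun x => by simp +contextual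
    · exact (mem_filter.1 hp₂).2.mono fun x => by simp +contextual
  rcases UTree.eq_or_eq_of_mem_famRestrictU_pull2Fam hres hmem hpair with h | h
  · exact mem_union_left _ (hpS _ h)
  · exact mem_union_right _ (hpS _ h)

end UTree.IsNodePartition

theorem three_mul_card_filter_mem_famFU_le (T₂ : UTree n) (hpart : T₁.IsNodePartition part)
    (X : Finset (Fin n)) :
    3 * #{p ∈ part.offDiag | X ∈ famFU T₁ T₂ part p.1 p.2} ≤
      #{p ∈ part.offDiag | X ∈ famMU T₁ T₂ part p.1 p.2} := by
  obtain hF | ⟨p₀, hp₀⟩ :=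
    ({p ∈ part.offDiag | X ∈ famFU T₁ T₂ part p.1 p.2}).eq_empty_or_nonempty
  · simp [hF]
  obtain ⟨hX, hblk, hres₂, hres, hpull₀⟩ :=
    mem_famMU.1 (famFU_subset_famMU (mem_filter.1 hp₀).2)
  have hQ : ∀ S ⊆ X, ∀ k, #S = k →
      #({B ∈ part | (B ∩ S).Nonempty} : Finset _).offDiag = k * k - k := by
    rintro S hS k rfl
    rw [offDiag_card, hpart.card_filter_inter_nonempty hblk hS]
  have hM : ({B ∈ part | (B ∩ X).Nonempty} : Finset _).offDiag ⊆
      {p ∈ part.offDiag | X ∈ famMU T₁ T₂ part p.1 p.2} := by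
    intro p hp
    have hpoff : p ∈ part.offDiag := by
      obtain ⟨hp₁, hp₂, hne⟩ := mem_offDiag.1 hp
      exact mem_offDiag.2 ⟨(mem_filter.1 hp₁).1, (mem_filter.1 hp₂).1, hne⟩
    exact mem_filter.2 ⟨hpoff, mem_famMU.2 ⟨hX, hblk, hres₂, hres,
      (hpart.famResolvedU_pull2Fam_iff hX hblk hres hpoff).2 hp⟩⟩
  have hP₀ : #((p₀.1 ∪ p₀.2) ∩ X) = 2 := (UTree.famResolvedU_pull2Fam_iff hX hres).1 hpull₀
  have hP₀c : #(X \ (p₀.1 ∪ p₀.2)) = 2 := by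
    rw [card_sdiff]
    omega
  have := hQ _ inter_subset_right 2 hP₀
  have := hQ _ sdiff_subset 2 hP₀c
  have := hQ X subset_rfl 4 hX
  have := card_le_card hM
  have := (card_le_card (hpart.filter_mem_famFU_subset (mem_filter.1 hp₀).2)).trans
    (card_union_le _ _)
  omega

theorem UTree.exists_two_mul_card_famFU_le (T₁ T₂ : UTree n)
    (hpart : T₁.IsNodePartition part) :
    ∃ p ∈ part.offDiag, 2 * #(famFU T₁ T₂ part p.1 p.2) ≤ #(famAU T₁ T₂ part p.1 p.2) := by
  obtain ⟨B₁, hB₁, B₂, hB₂, hne⟩ := one_lt_card.1 (by have := hpart.1; omega : 1 < #part)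
  simpa only [famAU_eq_sdiff] using
    exists_two_mul_card_le_card_sdiff ⟨(B₁, B₂), mem_offDiag.2 ⟨hB₁, hB₂, hne⟩⟩
      (fun p _ => famFU_subset_famMU) (three_mul_card_filter_mem_famFU_le T₂ hpart)

end UnrootedCount

/-- **Lemma.**  Rooted case: for any two rooted phylogenies `T₁, T₂` and any
unresolved node of `T₁` (a cluster `C` with at least `3` children), there is a
child `A` of `C` such that `|A_q| ≥ 2·|F_q|`.  Unrooted case: for any two unrooted
phylogenies `T₁, T₂` and any unresolved node of `T₁` (a node partition with at
least `4` blocks), there are two distinct blocks `B₁ ≠ B₂` with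
`|A_{qr}| ≥ 2·|F_{qr}|`. -/
theorem exists_bad_resolution (n : ℕ) :
    (∀ T₁ T₂ : RTree n, ∀ C ∈ T₁.clusters, 3 ≤ (T₁.childSet C).card →
      ∃ A ∈ T₁.childSet C, 2 * (famF T₁ T₂ C A).card ≤ (famA T₁ T₂ C A).card) ∧
    ∀ T₁ T₂ : UTree n, ∀ part : Finset (Finset (Fin n)),
      T₁.IsNodePartition part → 4 ≤ part.card →
        ∃ B₁ ∈ part, ∃ B₂ ∈ part, B₁ ≠ B₂ ∧
          2 * (famFU T₁ T₂ part B₁ B₂).card ≤ (famAU T₁ T₂ part B₁ B₂).card := by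
  refine ⟨fun T₁ T₂ C _ h3 => T₁.exists_two_mul_card_famF_le T₂ (card_pos.1 (by omega)),
    fun T₁ T₂ part hpart _ => ?_⟩
  obtain ⟨p, hp, hbad⟩ := T₁.exists_two_mul_card_famFU_le T₂ hpart
  obtain ⟨hp₁, hp₂, hne⟩ := mem_offDiag.1 hp
  exact ⟨p.1, hp₁, p.2, hp₂, hne, hbad⟩
end
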